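/- arXiv:2108.08299 — 3 statements merged into one kernel-verified Lean document; each statement's English description precedes it below -/
import Mathlib

section
/- Let r(n) be the number of (−1)-Dyck paths of semi-length n and let q_n be the number of (−1)-Dyck paths of semi-length n with at least one valley whose last valley is at ground level. Then for n > 3, r(n) = 3·r(n−1) − r(n−2) + q_{n−2} + Σ_{i=2}^{n−3} q_i·(r(n−i−1) − r(n−i−2)), with r(1) = 1, r(2) = 2, r(3) = 5. -/
/-!
Every nonempty Dyck path factors uniquely as `U A D B` with `A`, `B` Dyck paths. Its valley levels
are those of `A` raised by one, followed, when `B` is nonempty, by a valley at level `0` and the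
valleys of `B`. As valleys of Dyck paths lie at nonnegative levels, `U A D B` is `(-1)`-Dyck iff
`A` and `B` are and, when `B ≠ []`, `A` has no valley or its last valley is at level `0`. The only
valley-free path of semilength `i` is `UⁱDⁱ`, so `r(m+1) = r(m) + ∑_{i<m} (q_i + 1) r(m-i)`.
Subtracting this identity at `m` from the one at `m + 1` gives the recurrence; the terms with
`i ≤ 1` drop out because `q_0 = q_1 = 0`.
-/

/-- Value of a step: `true` = up-step U, `false` = down-step D. -/
def stepVal (b : Bool) : ℤ := if b then 1 else -1

/-- Heights (y-coordinates) of all lattice points visited along the path,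
starting at 0. -/
def heights (p : List Bool) : List ℤ := p.scanl (fun h b => h + stepVal b) 0

/-- A Dyck path: equal numbers of up and down steps, never going below the x-axis. -/
def IsDyck (p : List Bool) : Prop :=
  p.count true = p.count false ∧ ∀ h ∈ heights p, 0 ≤ h

/-- Semi-length of a path: the number of up-steps. -/
def semilength (p : List Bool) : ℕ := p.count true

/-- Levels (y-coordinates of the local minima) of the valleys (DU factors),
read from left to right. -/
def valleyLevels (p : List Bool) : List ℤ :=
  ((p.zip p.tail).zip (heights p).tail).filterMap
    (fun x => if x.1.1 = false ∧ x.1.2 = true then some x.2 else none)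

/-- A path is restricted `d`-Dyck (on the valley condition) if consecutive
valley levels `ν_i, ν_{i+1}` satisfy `ν_{i+1} - ν_i ≥ d`. -/
def RestrictedD (d : ℤ) (p : List Bool) : Prop :=
  List.Chain' (fun a b => d ≤ b - a) (valleyLevels p)

/-- Number of peaks (UD factors) of a path. -/
def peaks (p : List Bool) : ℕ := (p.zip p.tail).countP (fun x => x.1 && !x.2)

/-- The area of a path: the sum of the y-coordinates of all lattice points on it. -/
def pathArea (p : List Bool) : ℤ := (heights p).sum

/-- `dDyckCount d n` = number of `d`-Dyck paths of semi-length `n`. -/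
noncomputable def dDyckCount (d : ℤ) (n : ℕ) : ℕ :=
  {p : List Bool | IsDyck p ∧ semilength p = n ∧ RestrictedD d p}.ncard

/-- The path has no valleys, or its last valley is at ground level. -/
def NoValleyOrLastGround (p : List Bool) : Prop :=
  valleyLevels p = [] ∨ (valleyLevels p).getLast? = some 0

/-- `bCount n` = number of `(-1)`-Dyck paths of semi-length `n` having either
no valleys or last valley at ground level. -/
noncomputable def bCount (n : ℕ) : ℕ :=
  {p : List Bool | IsDyck p ∧ semilength p = n ∧ RestrictedD (-1) p ∧
    NoValleyOrLastGround p}.ncard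

/-- `qCount n` = number of `(-1)`-Dyck paths of semi-length `n` having at least
one valley, with the last valley at ground level. -/
noncomputable def qCount (n : ℕ) : ℕ :=
  {p : List Bool | IsDyck p ∧ semilength p = n ∧ RestrictedD (-1) p ∧
    (valleyLevels p).getLast? = some 0}.ncard

@[simp] lemma stepVal_true : stepVal true = 1 := rfl

@[simp] lemma stepVal_false : stepVal false = -1 := rfl

def endHeight (p : List Bool) : ℤ := (p.map stepVal).sum

@[simp] lemma endHeight_nil : endHeight [] = 0 := rfl

@[simp] lemma endHeight_cons (b : Bool) (p : List Bool) :
    endHeight (b :: p) = stepVal b + endHeight p := by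
  simp [endHeight]

@[simp] lemma endHeight_append (p q : List Bool) :
    endHeight (p ++ q) = endHeight p + endHeight q := by
  simp [endHeight]

lemma endHeight_eq_count_sub_count (p : List Bool) :
    endHeight p = p.count true - p.count false := by
  induction p with
  | nil => simp
  | cons b p ih => cases b <;> simp [ih] <;> ring

lemma foldl_stepVal (p : List Bool) (h : ℤ) :
    p.foldl (fun h b => h + stepVal b) h = h + endHeight p := by
  induction p generalizing h with
  | nil => simp
  | cons b p ih => simp [ih, add_assoc]

lemma mem_heights {p : List Bool} {x : ℤ} :
    x ∈ heights p ↔ ∃ k ≤ p.length, endHeight (p.take k) = x := by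
  simp [heights, List.mem_iff_getElem, foldl_stepVal]

lemma isDyck_iff {p : List Bool} :
    IsDyck p ↔ endHeight p = 0 ∧ ∀ k, 0 ≤ endHeight (p.take k) := by
  have hcount := endHeight_eq_count_sub_count p
  refine ⟨fun ⟨hc, hh⟩ => ⟨by omega, fun k => ?_⟩,
    fun ⟨he, hk⟩ => ⟨by omega, fun x hx => ?_⟩⟩
  · rcases le_total k p.length with hk | hk
    · exact hh _ (mem_heights.2 ⟨k, hk, rfl⟩)
    · rw [List.take_of_length_le hk]
      exact hh _ (mem_heights.2 ⟨p.length, le_rfl, by simp⟩)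
  · obtain ⟨k, -, rfl⟩ := mem_heights.1 hx
    exact hk k

lemma isDyck_nil : IsDyck [] := isDyck_iff.2 ⟨rfl, fun _ => by simp⟩

/-- `t` is read as a path starting at height `c`; `A` is the part before its first visit to `-1`. -/
lemma exists_eq_append_false_cons (t : List Bool) (c : ℕ)
    (hpre : ∀ k, -1 ≤ c + endHeight (t.take k)) (hend : c + endHeight t = -1) :
    ∃ A B, t = A ++ false :: B ∧ (∀ k, 0 ≤ c + endHeight (A.take k)) ∧ IsDyck B := by
  induction t generalizing c with
  | nil => simp at hend
  | cons b t ih =>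
    have hpre' (k : ℕ) := hpre (k + 1)
    cases b with
    | true =>
      simp only [List.take_succ_cons, endHeight_cons, stepVal_true] at hpre' hend
      obtain ⟨A, B, rfl, hA, hB⟩ :=
        ih (c + 1) (fun k => by push_cast; linarith [hpre' k]) (by push_cast; linarith)
      refine ⟨true :: A, B, rfl, ?_, hB⟩
      rintro (_ | k)
      · simp
      · push_cast at hA; simp; linarith [hA k]
    | false =>
      simp only [List.take_succ_cons, endHeight_cons, stepVal_false] at hpre' hend
      cases c with
      | zero =>
        refine ⟨[], t, rfl, fun _ => by simp, isDyck_iff.2 ⟨?_, fun k => ?_⟩⟩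
        · push_cast at hend; linarith
        · push_cast at hpre'; linarith [hpre' k]
      | succ c =>
        push_cast at hpre' hend
        obtain ⟨A, B, rfl, hA, hB⟩ :=
          ih c (fun k => by linarith [hpre' k]) (by linarith)
        refine ⟨false :: A, B, rfl, ?_, hB⟩
        rintro (_ | k)
        · simp only [List.take_zero, endHeight_nil]; positivity
        · push_cast; simp; linarith [hA k]

namespace IsDyck

variable {p A B A' B' : List Bool}

lemma endHeight_eq_zero (hp : IsDyck p) : endHeight p = 0 := (isDyck_iff.1 hp).1

lemma endHeight_take_nonneg (hp : IsDyck p) (k : ℕ) : 0 ≤ endHeight (p.take k) :=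
  (isDyck_iff.1 hp).2 k

lemma length_eq (hp : IsDyck p) : p.length = 2 * semilength p := by
  have := List.count_true_add_count_false p
  have := hp.1
  unfold semilength
  omega

lemma eq_nil_of_semilength_eq_zero (hp : IsDyck p) (h : semilength p = 0) : p = [] := by
  simpa [h] using hp.length_eq

lemma exists_eq_true_cons (hp : IsDyck p) (hne : p ≠ []) : ∃ t, p = true :: t := by
  obtain ⟨b, t, rfl⟩ := List.exists_cons_of_ne_nil hne
  have := hp.endHeight_take_nonneg 1
  cases b
  · simp at this
  · exact ⟨t, rfl⟩

theorem exists_firstReturn (hp : IsDyck p) (hne : p ≠ []) :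
    ∃ A B, IsDyck A ∧ IsDyck B ∧ p = true :: A ++ false :: B := by
  obtain ⟨t, rfl⟩ := hp.exists_eq_true_cons hne
  have hend := hp.endHeight_eq_zero
  obtain ⟨A, B, rfl, hA, hB⟩ := exists_eq_append_false_cons t 0
    (fun k => by have := hp.endHeight_take_nonneg (k + 1); simp at this ⊢; linarith)
    (by simp at hend ⊢; linarith)
  refine ⟨A, B, isDyck_iff.2 ⟨?_, by simpa using hA⟩, hB, rfl⟩
  simp [hB.endHeight_eq_zero] at hend
  linarith

lemma length_le_of_append_false_cons_eq (hA : IsDyck A) (hA' : IsDyck A')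
    (h : A ++ false :: B = A' ++ false :: B') : A'.length ≤ A.length := by
  by_contra hlt
  have htake := congrArg (List.take (A.length + 1)) h
  rw [List.take_append_of_le_length (by omega : A.length + 1 ≤ A'.length)] at htake
  have := hA'.endHeight_take_nonneg (A.length + 1)
  rw [← htake, List.take_append, List.take_of_length_le (by omega),
    Nat.add_sub_cancel_left] at this
  simp [hA.endHeight_eq_zero] at this

lemma append_false_cons_inj (hA : IsDyck A) (hA' : IsDyck A')
    (h : A ++ false :: B = A' ++ false :: B') : A = A' ∧ B = B' := by
  obtain ⟨rfl, hB⟩ := List.append_inj h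
    (le_antisymm (length_le_of_append_false_cons_eq hA' hA h.symm)
      (length_le_of_append_false_cons_eq hA hA' h))
  exact ⟨rfl, List.cons_injective hB⟩

end IsDyck

lemma isDyck_firstReturn {A B : List Bool} (hA : IsDyck A) (hB : IsDyck B) :
    IsDyck (true :: A ++ false :: B) := by
  refine isDyck_iff.2 ⟨by simp [hA.endHeight_eq_zero, hB.endHeight_eq_zero], ?_⟩
  rintro (_ | k)
  · simp
  rw [List.cons_append, List.take_succ_cons, endHeight_cons, List.take_append]
  rcases Nat.lt_or_ge A.length k with hk | hk
  · obtain ⟨j, rfl⟩ := Nat.exists_eq_add_of_lt hk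
    simp [List.take_of_length_le, hA.endHeight_eq_zero,
      hB.endHeight_take_nonneg j, Nat.add_assoc]
  · simp [Nat.sub_eq_zero_of_le hk]
    linarith [hA.endHeight_take_nonneg k]

/-- The valley levels of a path drawn from height `h`; `afterDown` records whether the step
preceding it is a down-step, in which case a leading up-step closes a valley at level `h`. -/
def valleysFrom (h : ℤ) (afterDown : Bool) : List Bool → List ℤ
  | [] => []
  | b :: p => (if afterDown && b then [h] else []) ++ valleysFrom (h + stepVal b) (!b) p

@[simp] lemma valleysFrom_nil (h : ℤ) (d : Bool) : valleysFrom h d [] = [] := rfl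

lemma valleysFrom_cons (h : ℤ) (d b : Bool) (p : List Bool) :
    valleysFrom h d (b :: p) =
      (if d && b then [h] else []) ++ valleysFrom (h + stepVal b) (!b) p := rfl

lemma valleysFrom_eq_filterMap (a : Bool) (p : List Bool) (h : ℤ) :
    (((a :: p).zip p).zip (p.scanl (fun h b => h + stepVal b) h)).filterMap
        (fun x => if x.1.1 = false ∧ x.1.2 = true then some x.2 else none) =
      valleysFrom h (!a) p := by
  induction p generalizing a h with
  | nil => rfl
  | cons b p ih =>
    rw [List.scanl_cons, List.zip_cons_cons, List.zip_cons_cons, List.filterMap_cons, ih,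
      valleysFrom_cons]
    cases a <;> cases b <;> rfl

@[simp] lemma valleyLevels_nil : valleyLevels [] = [] := rfl

lemma valleyLevels_eq_valleysFrom (p : List Bool) : valleyLevels p = valleysFrom 0 false p := by
  cases p with
  | nil => rfl
  | cons a p =>
    rw [valleyLevels, heights, List.scanl_cons, List.tail_cons, List.tail_cons,
      valleysFrom_eq_filterMap, valleysFrom_cons]
    simp

lemma valleysFrom_add (c h : ℤ) (d : Bool) (p : List Bool) :
    valleysFrom (h + c) d p = (valleysFrom h d p).map (· + c) := by
  induction p generalizing h d with
  | nil => rfl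
  | cons b p ih =>
    rw [valleysFrom_cons, valleysFrom_cons, add_right_comm, ih]
    split <;> simp

lemma valleysFrom_append_false_cons (h : ℤ) (d : Bool) (A B : List Bool) :
    valleysFrom h d (A ++ false :: B) =
      valleysFrom h d A ++ valleysFrom (h + endHeight A - 1) true B := by
  induction A generalizing h d with
  | nil => simp [valleysFrom_cons, sub_eq_add_neg]
  | cons b A ih => simp [valleysFrom_cons, ih, add_assoc]

lemma exists_eq_add_endHeight_take_of_mem_valleysFrom {h x : ℤ} {d : Bool} {p : List Bool}
    (hx : x ∈ valleysFrom h d p) : ∃ k, x = h + endHeight (p.take k) := by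
  induction p generalizing h d with
  | nil => simp at hx
  | cons b p ih =>
    rw [valleysFrom_cons, List.mem_append] at hx
    rcases hx with hx | hx
    · refine ⟨0, ?_⟩
      split at hx <;> simp_all
    · obtain ⟨k, rfl⟩ := ih hx
      exact ⟨k + 1, by simp [add_assoc]⟩

lemma IsDyck.nonneg_of_mem_valleyLevels {p : List Bool} (hp : IsDyck p) {x : ℤ}
    (hx : x ∈ valleyLevels p) : 0 ≤ x := by
  rw [valleyLevels_eq_valleysFrom] at hx
  obtain ⟨k, rfl⟩ := exists_eq_add_endHeight_take_of_mem_valleysFrom hx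
  simpa using hp.endHeight_take_nonneg k

lemma valleyLevels_firstReturn {A : List Bool} (hA : endHeight A = 0) (B : List Bool) :
    valleyLevels (true :: A ++ false :: B) =
      (valleyLevels A).map (· + 1) ++ valleysFrom 0 true B := by
  rw [valleyLevels_eq_valleysFrom, valleyLevels_eq_valleysFrom, List.cons_append,
    valleysFrom_cons, valleysFrom_append_false_cons, ← valleysFrom_add]
  simp [hA]

lemma IsDyck.valleysFrom_zero_true {B : List Bool} (hB : IsDyck B) (hne : B ≠ []) :
    valleysFrom 0 true B = 0 :: valleyLevels B := by
  obtain ⟨t, rfl⟩ := hB.exists_eq_true_cons hne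
  simp [valleysFrom_cons, valleyLevels_eq_valleysFrom]

lemma restrictedD_iff (d : ℤ) (p : List Bool) :
    RestrictedD d p ↔ (valleyLevels p).IsChain (fun a b => d ≤ b - a) := Iff.rfl

lemma IsDyck.noValleyOrLastGround_iff {A : List Bool} (hA : IsDyck A) :
    NoValleyOrLastGround A ↔ ∀ x ∈ (valleyLevels A).getLast?, x ≤ 0 := by
  unfold NoValleyOrLastGround
  rcases hlast : (valleyLevels A).getLast? with _ | x
  · simpa using List.getLast?_eq_none_iff.1 hlast
  · have := hA.nonneg_of_mem_valleyLevels (List.mem_of_getLast? hlast)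
    have hne : valleyLevels A ≠ [] := by rintro h; simp [h] at hlast
    simp only [hne, false_or, Option.mem_def, Option.some.injEq, forall_eq']
    omega

theorem restrictedD_firstReturn_iff {A B : List Bool} (hA : IsDyck A) (hB : IsDyck B) :
    RestrictedD (-1) (true :: A ++ false :: B) ↔
      RestrictedD (-1) A ∧ RestrictedD (-1) B ∧ (B ≠ [] → NoValleyOrLastGround A) := by
  have hshift : RestrictedD (-1) A ↔ ((valleyLevels A).map (· + 1)).IsChain
      (fun a b => -1 ≤ b - a) := by
    rw [restrictedD_iff, List.isChain_map]
    simp only [add_sub_add_right_eq_sub]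
  rw [restrictedD_iff, valleyLevels_firstReturn hA.endHeight_eq_zero, List.isChain_append,
    ← hshift]
  rcases eq_or_ne B [] with rfl | hne
  · simp [restrictedD_iff]
  have hground :
      (0 :: valleyLevels B).IsChain (fun a b => -1 ≤ b - a) ↔ RestrictedD (-1) B := by
    refine List.isChain_cons.trans (and_iff_right fun y hy => ?_)
    linarith [hB.nonneg_of_mem_valleyLevels (List.mem_of_mem_head? hy)]
  rw [hB.valleysFrom_zero_true hne, hground, hA.noValleyOrLastGround_iff, List.getLast?_map]
  simp only [Option.mem_map, List.head?_cons, Option.mem_some_iff]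
  constructor
  · rintro ⟨hA', hB', hjoin⟩
    exact ⟨hA', hB', fun _ x hx => by linarith [hjoin _ ⟨x, hx, rfl⟩ 0 rfl]⟩
  · rintro ⟨hA', hB', hjoin⟩
    refine ⟨hA', hB', ?_⟩
    rintro _ ⟨x, hx, rfl⟩ _ rfl
    linarith [hjoin hne x hx]

lemma semilength_firstReturn (A B : List Bool) :
    semilength (true :: A ++ false :: B) = semilength A + semilength B + 1 := by
  simp [semilength]

def pyramid (n : ℕ) : List Bool := List.replicate n true ++ List.replicate n false

lemma pyramid_succ (n : ℕ) : pyramid (n + 1) = true :: pyramid n ++ [false] := by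
  rw [pyramid, pyramid, List.replicate_succ, List.replicate_succ']
  simp

lemma semilength_pyramid (n : ℕ) : semilength (pyramid n) = n := by
  simp [pyramid, semilength, List.count_replicate]

lemma isDyck_pyramid (n : ℕ) : IsDyck (pyramid n) := by
  induction n with
  | zero => exact isDyck_nil
  | succ n ih => rw [pyramid_succ]; exact isDyck_firstReturn ih isDyck_nil

lemma valleyLevels_pyramid (n : ℕ) : valleyLevels (pyramid n) = [] := by
  induction n with
  | zero => rfl
  | succ n ih =>
    rw [pyramid_succ, valleyLevels_firstReturn (isDyck_pyramid n).endHeight_eq_zero, ih]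
    rfl

theorem IsDyck.eq_pyramid {p : List Bool} (hp : IsDyck p) (hv : valleyLevels p = []) :
    p = pyramid (semilength p) := by
  induction hn : semilength p generalizing p with
  | zero => exact hp.eq_nil_of_semilength_eq_zero hn
  | succ n ih =>
    obtain ⟨A, B, hA, hB, rfl⟩ := hp.exists_firstReturn (by rintro rfl; simp [semilength] at hn)
    rw [valleyLevels_firstReturn hA.endHeight_eq_zero, List.append_eq_nil_iff,
      List.map_eq_nil_iff] at hv
    obtain rfl : B = [] := by
      by_contra hne
      simp [hB.valleysFrom_zero_true hne] at hv
    rw [semilength_firstReturn] at hn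
    rw [ih hA hv.1 (by simpa [semilength] using hn), pyramid_succ]

def rPaths (n : ℕ) : Set (List Bool) :=
  {p | IsDyck p ∧ semilength p = n ∧ RestrictedD (-1) p}

def bPaths (n : ℕ) : Set (List Bool) :=
  {p | IsDyck p ∧ semilength p = n ∧ RestrictedD (-1) p ∧ NoValleyOrLastGround p}

def qPaths (n : ℕ) : Set (List Bool) :=
  {p | IsDyck p ∧ semilength p = n ∧ RestrictedD (-1) p ∧ (valleyLevels p).getLast? = some 0}

lemma dDyckCount_eq_ncard (n : ℕ) : dDyckCount (-1) n = (rPaths n).ncard := rfl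

lemma bCount_eq_ncard (n : ℕ) : bCount n = (bPaths n).ncard := rfl

lemma qCount_eq_ncard (n : ℕ) : qCount n = (qPaths n).ncard := rfl

lemma finite_isDyck_semilength_eq (n : ℕ) : {p | IsDyck p ∧ semilength p = n}.Finite :=
  (List.finite_length_eq Bool (2 * n)).subset fun p ⟨hp, hn⟩ => by
    rw [Set.mem_ofPred_eq, hp.length_eq, hn]

lemma rPaths_finite (n : ℕ) : (rPaths n).Finite :=
  (finite_isDyck_semilength_eq n).subset fun _ ⟨hp, hn, _⟩ => ⟨hp, hn⟩

lemma bPaths_finite (n : ℕ) : (bPaths n).Finite :=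
  (finite_isDyck_semilength_eq n).subset fun _ ⟨hp, hn, _⟩ => ⟨hp, hn⟩

lemma qPaths_finite (n : ℕ) : (qPaths n).Finite :=
  (finite_isDyck_semilength_eq n).subset fun _ ⟨hp, hn, _⟩ => ⟨hp, hn⟩

lemma bPaths_eq_insert_pyramid (n : ℕ) : bPaths n = insert (pyramid n) (qPaths n) := by
  ext p
  simp only [bPaths, qPaths, Set.mem_insert_iff, Set.mem_ofPred_eq, NoValleyOrLastGround]
  constructor
  · rintro ⟨hp, rfl, hr, hv | hlast⟩
    · exact .inl (hp.eq_pyramid hv)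
    · exact .inr ⟨hp, rfl, hr, hlast⟩
  · rintro (rfl | ⟨hp, hn, hr, hlast⟩)
    · exact ⟨isDyck_pyramid n, semilength_pyramid n,
        by simp [restrictedD_iff, valleyLevels_pyramid], .inl (valleyLevels_pyramid n)⟩
    · exact ⟨hp, hn, hr, .inr hlast⟩

lemma bCount_eq_qCount_add_one (n : ℕ) : bCount n = qCount n + 1 := by
  rw [bCount_eq_ncard, qCount_eq_ncard, bPaths_eq_insert_pyramid,
    Set.ncard_insert_of_notMem _ (qPaths_finite n)]
  rintro ⟨-, -, -, hlast⟩
  simp [valleyLevels_pyramid] at hlast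

lemma bCount_le_dDyckCount (n : ℕ) : bCount n ≤ dDyckCount (-1) n :=
  Set.ncard_le_ncard (fun _ ⟨hp, hn, hr, _⟩ => ⟨hp, hn, hr⟩) (rPaths_finite n)

lemma dDyckCount_zero : dDyckCount (-1) 0 = 1 := by
  rw [dDyckCount_eq_ncard, Set.ncard_eq_one]
  refine ⟨[], Set.eq_singleton_iff_unique_mem.2 ⟨⟨isDyck_nil, rfl, ?_⟩, ?_⟩⟩
  · simp [restrictedD_iff]
  · exact fun p ⟨hp, hn, _⟩ => hp.eq_nil_of_semilength_eq_zero hn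

def firstReturn (AB : List Bool × List Bool) : List Bool := true :: AB.1 ++ false :: AB.2

lemma injOn_firstReturn : Set.InjOn firstReturn {AB | IsDyck AB.1} := by
  rintro ⟨A, B⟩ hA ⟨A', B'⟩ hA' h
  obtain ⟨rfl, rfl⟩ := IsDyck.append_false_cons_inj hA hA' (List.cons_injective h)
  rfl

def firstReturnFactors (m : ℕ) : Set (List Bool × List Bool) :=
  rPaths m ×ˢ {[]} ∪ ⋃ i ∈ Finset.range m, bPaths i ×ˢ rPaths (m - i)

lemma rPaths_succ (m : ℕ) : rPaths (m + 1) = firstReturn '' firstReturnFactors m := by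
  ext p
  constructor
  · rintro ⟨hp, hn, hr⟩
    obtain ⟨A, B, hA, hB, rfl⟩ := hp.exists_firstReturn (by rintro rfl; simp [semilength] at hn)
    rw [semilength_firstReturn] at hn
    obtain ⟨hrA, hrB, hground⟩ := (restrictedD_firstReturn_iff hA hB).1 hr
    refine ⟨(A, B), ?_, rfl⟩
    rcases eq_or_ne B [] with rfl | hne
    · exact .inl ⟨⟨hA, by simpa [semilength] using hn, hrA⟩, rfl⟩
    · have : semilength B ≠ 0 := fun h => hne (hB.eq_nil_of_semilength_eq_zero h)
      simp only [firstReturnFactors, Set.mem_union, Set.mem_iUnion, Finset.mem_range, Set.mem_prod]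
      exact .inr ⟨semilength A, by omega, ⟨hA, rfl, hrA, hground hne⟩, hB, by omega, hrB⟩
  · rintro ⟨⟨A, B⟩, hAB, rfl⟩
    simp only [firstReturnFactors, Set.mem_union, Set.mem_iUnion, Finset.mem_range, Set.mem_prod,
      Set.mem_singleton_iff] at hAB
    rcases hAB with ⟨⟨hA, hn, hrA⟩, rfl⟩ | ⟨i, hi, ⟨hA, hnA, hrA, hgA⟩, hB, hnB, hrB⟩
    · refine ⟨isDyck_firstReturn hA isDyck_nil, ?_, (restrictedD_firstReturn_iff hA isDyck_nil).2
        ⟨hrA, by simp [restrictedD_iff], by simp⟩⟩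
      rw [firstReturn, semilength_firstReturn, hn]
      rfl
    · refine ⟨isDyck_firstReturn hA hB, ?_,
        (restrictedD_firstReturn_iff hA hB).2 ⟨hrA, hrB, fun _ => hgA⟩⟩
      rw [firstReturn, semilength_firstReturn, hnA, hnB]
      omega

lemma ncard_firstReturnFactors (m : ℕ) :
    (firstReturnFactors m).ncard =
      dDyckCount (-1) m + ∑ i ∈ Finset.range m, bCount i * dDyckCount (-1) (m - i) := by
  have hdisj :
      Disjoint (rPaths m ×ˢ {[]}) (⋃ i ∈ Finset.range m, bPaths i ×ˢ rPaths (m - i)) := by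
    refine Set.disjoint_left.2 fun ⟨A, B⟩ ⟨_, hB⟩ h => ?_
    simp only [Set.mem_iUnion, Finset.mem_range] at h
    obtain ⟨i, hi, -, -, hn, -⟩ := h
    simp only [Set.mem_singleton_iff] at hB
    simp [hB, semilength] at hn
    omega
  have hpairwise :
      (Finset.range m : Set ℕ).PairwiseDisjoint fun i => bPaths i ×ˢ rPaths (m - i) :=
    fun i _ j _ hij =>
      Set.disjoint_left.2 fun _ ⟨⟨_, hi, _⟩, _⟩ ⟨⟨_, hj, _⟩, _⟩ => hij (hi ▸ hj)
  have hfinite (i : ℕ) : (bPaths i ×ˢ rPaths (m - i)).Finite :=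
    (bPaths_finite i).prod (rPaths_finite _)
  rw [firstReturnFactors, Set.ncard_union_eq hdisj ((rPaths_finite m).prod (Set.finite_singleton _))
      ((Finset.finite_toSet _).biUnion fun i _ => hfinite i),
    Set.ncard_prod, Set.ncard_singleton, mul_one, ← Finset.set_biUnion_coe,
    (Finset.finite_toSet _).ncard_biUnion (fun i _ => hfinite i) hpairwise, finsum_mem_coe_finset]
  simp only [Set.ncard_prod, dDyckCount_eq_ncard, bCount_eq_ncard]

theorem dDyckCount_succ (m : ℕ) :
    dDyckCount (-1) (m + 1) =
      dDyckCount (-1) m + ∑ i ∈ Finset.range m, bCount i * dDyckCount (-1) (m - i) := by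
  rw [dDyckCount_eq_ncard, rPaths_succ, (injOn_firstReturn.mono _).ncard_image,
    ncard_firstReturnFactors]
  rintro ⟨A, B⟩ (⟨⟨hA, -⟩, -⟩ | h)
  · exact hA
  · simp only [Set.mem_iUnion] at h
    obtain ⟨i, -, ⟨hA, -⟩, -⟩ := h
    exact hA

section Recurrence

open Finset

variable {R : Type*} [CommRing R] {r q : ℕ → R}

lemma eq_three_mul_sub_add_of_eq_add_sum
    (h : ∀ m, r (m + 1) = r m + ∑ i ∈ range m, (q i + 1) * r (m - i)) (m : ℕ) :
    r (m + 2) = 3 * r (m + 1) - r m +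
      (∑ i ∈ range (m + 1), q i * r (m + 1 - i) - ∑ i ∈ range m, q i * r (m - i)) := by
  have hshift :
      ∑ i ∈ range (m + 1), r (m + 1 - i) = ∑ i ∈ range m, r (m - i) + r (m + 1) := by
    rw [sum_range_succ']
    simp
  have h₁ := h (m + 1)
  have h₀ := h m
  simp only [add_mul, one_mul, sum_add_distrib, hshift] at h₁ h₀
  linear_combination h₁ - h₀

lemma sum_range_succ_mul_sub_sum_range_mul (m : ℕ) :
    ∑ i ∈ range (m + 1), q i * r (m + 1 - i) - ∑ i ∈ range m, q i * r (m - i) =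
      q m * r 1 + ∑ i ∈ range m, q i * (r (m + 1 - i) - r (m - i)) := by
  rw [sum_range_succ, Nat.add_sub_cancel_left]
  simp only [mul_sub, sum_sub_distrib]
  ring

lemma sum_range_add_two_eq_sum_Icc {M : Type*} [AddCommMonoid M] {f : ℕ → M} (h₀ : f 0 = 0)
    (h₁ : f 1 = 0) (k : ℕ) : ∑ i ∈ range (k + 2), f i = ∑ i ∈ Icc 2 (k + 1), f i := by
  rw [range_eq_Ico, ← Ico_add_one_right_eq_Icc,
    ← sum_Ico_consecutive f (Nat.zero_le 2) (by omega : 2 ≤ k + 2)]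
  simp [sum_range_succ, h₀, h₁]
  rfl

theorem recurrence_of_eq_add_sum
    (h : ∀ m, r (m + 1) = r m + ∑ i ∈ range m, (q i + 1) * r (m - i))
    (hq₀ : q 0 = 0) (hq₁ : q 1 = 0) (hr₁ : r 1 = 1) (k : ℕ) :
    r (k + 4) = 3 * r (k + 3) - r (k + 2) + q (k + 2) +
      ∑ i ∈ Icc 2 (k + 1), q i * (r (k + 3 - i) - r (k + 2 - i)) := by
  rw [eq_three_mul_sub_add_of_eq_add_sum h, sum_range_succ_mul_sub_sum_range_mul, hr₁, mul_one,
    sum_range_add_two_eq_sum_Icc (by simp [hq₀]) (by simp [hq₁])]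
  ring

end Recurrence

lemma dDyckCount_one : dDyckCount (-1) 1 = 1 := by
  simp [dDyckCount_succ, dDyckCount_zero]

lemma qCount_eq_zero_of_le_one {n : ℕ} (hn : n ≤ 1) : qCount n = 0 := by
  have h := bCount_le_dDyckCount n
  rw [bCount_eq_qCount_add_one] at h
  interval_cases n
  · simpa [dDyckCount_zero] using h
  · simpa [dDyckCount_one] using h

lemma dDyckCount_succ_eq_add_sum_qCount (m : ℕ) :
    (dDyckCount (-1) (m + 1) : ℤ) =
      dDyckCount (-1) m +
        ∑ i ∈ Finset.range m, ((qCount i : ℤ) + 1) * dDyckCount (-1) (m - i) := by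
  simp [dDyckCount_succ, bCount_eq_qCount_add_one]

/-- For `n > 3`,
`r(n) = 3r(n-1) - r(n-2) + q_{n-2} + Σ_{i=2}^{n-3} q_i (r(n-i-1) - r(n-i-2))`,
with `r(1) = 1`, `r(2) = 2`, `r(3) = 5`. -/
theorem rCount_recurrence :
    (∀ n : ℕ, 3 < n →
      (dDyckCount (-1) n : ℤ) =
        3 * dDyckCount (-1) (n - 1) - dDyckCount (-1) (n - 2) + qCount (n - 2) +
        ∑ i ∈ Finset.Icc 2 (n - 3),
          (qCount i : ℤ) *
            ((dDyckCount (-1) (n - i - 1) : ℤ) - (dDyckCount (-1) (n - i - 2) : ℤ))) ∧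
    dDyckCount (-1) 1 = 1 ∧ dDyckCount (-1) 2 = 2 ∧ dDyckCount (-1) 3 = 5 := by
  have hq₀ := qCount_eq_zero_of_le_one zero_le_one
  have hq₁ := qCount_eq_zero_of_le_one le_rfl
  refine ⟨fun n hn => ?_, dDyckCount_one, ?_, ?_⟩
  · obtain ⟨k, rfl⟩ : ∃ k, n = k + 4 := ⟨n - 4, by omega⟩
    refine (recurrence_of_eq_add_sum (r := fun n => (dDyckCount (-1) n : ℤ))
      (q := fun n => (qCount n : ℤ)) dDyckCount_succ_eq_add_sum_qCount (by simp [hq₀])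
      (by simp [hq₁]) (by simp [dDyckCount_one]) k).trans ?_
    simp only [show k + 4 - 1 = k + 3 by omega, show k + 4 - 2 = k + 2 by omega,
      show k + 4 - 3 = k + 1 by omega]
    congr 1
    refine Finset.sum_congr rfl fun i hi => ?_
    rw [Finset.mem_Icc] at hi
    rw [show k + 4 - i - 1 = k + 3 - i by omega, show k + 4 - i - 2 = k + 2 - i by omega]
  all_goals simp [dDyckCount_succ, Finset.sum_range_succ, bCount_eq_qCount_add_one, hq₀, hq₁,
    dDyckCount_zero]
end

section
/- For d ≥ 0, the bivariate generating function L_d(x,y) = Σ_P x^{ℓ(P)} y^{ρ(P)}, summed over all d-Dyck paths P (including the empty path), where ℓ is the semi-length and ρ the number of peaks, equals 1 + xy(1 − 2x + x² + xy − x^{d+1}y) / ((1−x)(1 − 2x + x² − x^{d+1}y)). -/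
open MvPowerSeries

/-- The bivariate generating function `L_d(x,y) = Σ_P x^{ℓ(P)} y^{ρ(P)}` over all
`d`-Dyck paths `P` (including the empty path), where the variable `0` marks the
semi-length and the variable `1` marks the number of peaks. -/
noncomputable def Lbiv (d : ℤ) : MvPowerSeries (Fin 2) ℚ :=
  fun m => ({p : List Bool | IsDyck p ∧ RestrictedD d p ∧
    semilength p = m 0 ∧ peaks p = m 1}.ncard : ℚ)

/-!
A nonempty Dyck path is a sequence of blocks `U^a D^b` with `a, b ≥ 1`: its peaks are the
blocks and its valleys sit at the partial sums of the rises `a - b`. For `d ≥ 0`, a `d`-Dyck path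
with at least two peaks is therefore a free choice of a first block of rise `e ≥ 0`, a list of
middle blocks each rising by at least `d`, and the up-length of a last block, whose down-length
is then forced. Weighted by semilength and peaks, these choices multiply as generating functions:
with `G = 1/(1-x)` and `M = 1/(1 - x^{d+1} y G²)`,
`L_d = 1 + x y G + (x y G²) M (x y G)`, which rearranges to the stated identity.
-/

/-! ### Generating functions of weighted types -/

section GenFun

variable {σ α β : Type*} (R : Type*) [Semiring R]

open MvPowerSeries Finset.HasAntidiagonal

def Function.FiniteFibers (w : α → σ →₀ ℕ) : Prop := ∀ m, Finite {a // w a = m}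

/-- An infinite fiber gives the junk coefficient `0`. -/
noncomputable def genFun (w : α → σ →₀ ℕ) : MvPowerSeries σ R := fun m => Nat.card {a // w a = m}

variable {R}

theorem coeff_genFun (w : α → σ →₀ ℕ) (m : σ →₀ ℕ) :
    coeff m (genFun R w) = Nat.card {a // w a = m} := rfl

theorem genFun_congr (e : α ≃ β) {w : α → σ →₀ ℕ} {w' : β → σ →₀ ℕ} (h : ∀ a, w' (e a) = w a) :
    genFun R w' = genFun R w := by
  ext m
  rw [coeff_genFun, coeff_genFun,
    Nat.card_congr (e.subtypeEquiv (p := fun a => w a = m) (q := fun b => w' b = m) (by simp [h]))]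

theorem genFun_const [DecidableEq σ] (c : σ →₀ ℕ) :
    genFun R (fun _ : Unit => c) = monomial c 1 := by
  ext m
  rw [coeff_genFun, coeff_monomial]
  split_ifs with h <;> simp [h, Ne.symm]

theorem Function.FiniteFibers.sumElim {w₁ : α → σ →₀ ℕ} {w₂ : β → σ →₀ ℕ} (h₁ : w₁.FiniteFibers)
    (h₂ : w₂.FiniteFibers) : (Sum.elim w₁ w₂).FiniteFibers := fun m =>
  have := h₁ m
  have := h₂ m
  Finite.of_equiv ({a // w₁ a = m} ⊕ {b // w₂ b = m})
    (Equiv.subtypeSum (p := fun x => Sum.elim w₁ w₂ x = m)).symm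

theorem genFun_sumElim {w₁ : α → σ →₀ ℕ} {w₂ : β → σ →₀ ℕ} (h₁ : w₁.FiniteFibers)
    (h₂ : w₂.FiniteFibers) : genFun R (Sum.elim w₁ w₂) = genFun R w₁ + genFun R w₂ := by
  ext m
  have := h₁ m
  have := h₂ m
  rw [map_add, coeff_genFun, coeff_genFun, coeff_genFun, ← Nat.cast_add, ← Nat.card_sum]
  exact congrArg _ (Nat.card_congr Equiv.subtypeSum)

def fiberProdEquiv [DecidableEq σ] (w₁ : α → σ →₀ ℕ) (w₂ : β → σ →₀ ℕ) (m : σ →₀ ℕ) :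
    {p : α × β // w₁ p.1 + w₂ p.2 = m} ≃
      Σ ij : antidiagonal m, {a // w₁ a = ij.1.1} × {b // w₂ b = ij.1.2} where
  toFun p := ⟨⟨(w₁ p.1.1, w₂ p.1.2), mem_antidiagonal.2 p.2⟩, ⟨p.1.1, rfl⟩, ⟨p.1.2, rfl⟩⟩
  invFun q := ⟨(q.2.1.1, q.2.2.1), by rw [q.2.1.2, q.2.2.2]; exact mem_antidiagonal.1 q.1.2⟩
  left_inv p := rfl
  right_inv := by
    rintro ⟨⟨⟨i, j⟩, h⟩, ⟨a, ha⟩, ⟨b, hb⟩⟩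
    dsimp only at ha hb
    subst ha hb
    rfl

theorem Function.FiniteFibers.prod {w₁ : α → σ →₀ ℕ} {w₂ : β → σ →₀ ℕ} (h₁ : w₁.FiniteFibers)
    (h₂ : w₂.FiniteFibers) : (fun p : α × β => w₁ p.1 + w₂ p.2).FiniteFibers := by
  classical
  intro m
  have : ∀ i, Finite {a // w₁ a = i} := h₁
  have : ∀ j, Finite {b // w₂ b = j} := h₂
  exact Finite.of_equiv _ (fiberProdEquiv w₁ w₂ m).symm

theorem genFun_prod {w₁ : α → σ →₀ ℕ} {w₂ : β → σ →₀ ℕ} (h₁ : w₁.FiniteFibers)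
    (h₂ : w₂.FiniteFibers) :
    genFun R (fun p : α × β => w₁ p.1 + w₂ p.2) = genFun R w₁ * genFun R w₂ := by
  classical
  ext m
  have : ∀ i, Finite {a // w₁ a = i} := h₁
  have : ∀ j, Finite {b // w₂ b = j} := h₂
  rw [coeff_mul, coeff_genFun, Nat.card_congr (fiberProdEquiv w₁ w₂ m), Nat.card_sigma,
    Nat.cast_sum]
  simp only [Nat.card_prod, Nat.cast_mul, coeff_genFun]
  exact Finset.sum_coe_sort (antidiagonal m)
    fun ij => (Nat.card {a // w₁ a = ij.1} : R) * Nat.card {b // w₂ b = ij.2}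

theorem Function.FiniteFibers.add_const {w : α → σ →₀ ℕ} (h : w.FiniteFibers) (c : σ →₀ ℕ) :
    (fun a => w a + c).FiniteFibers := fun m =>
  have := h (m - c)
  Finite.of_injective (fun a => (⟨a.1, eq_tsub_of_add_eq a.2⟩ : {a // w a = m - c}))
    fun _ _ hab => Subtype.ext (congrArg Subtype.val hab :)

theorem genFun_add_const [DecidableEq σ] {w : α → σ →₀ ℕ} (h : w.FiniteFibers) (c : σ →₀ ℕ) :
    genFun R (fun a => w a + c) = genFun R w * monomial c 1 := by
  rw [← genFun_const (R := R), ← genFun_prod (R := R) h fun _ => inferInstance]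
  exact genFun_congr (R := R) (Equiv.prodPUnit α) fun _ => rfl

theorem Function.Injective.finiteFibers {w : α → σ →₀ ℕ} (hw : Function.Injective w) :
    w.FiniteFibers := fun m =>
  have : Subsingleton {a // w a = m} := ⟨fun a b => Subtype.ext (hw (a.2.trans b.2.symm))⟩
  inferInstance

theorem genFun_single_mul_one_sub_X {R : Type*} [CommRing R] [DecidableEq σ] (i : σ) :
    genFun R (Finsupp.single i) * (1 - X i) = 1 := by
  have h : genFun R (Finsupp.single i) = genFun R (Finsupp.single i) * X i + 1 := by
    rw [X_def, ← genFun_add_const (Finsupp.single_injective i).finiteFibers, ← monomial_zero_one,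
      ← genFun_const,
      ← genFun_sumElim (R := R) ((Finsupp.single_injective i).finiteFibers.add_const _)
        fun _ => inferInstance]
    refine genFun_congr (R := R) Equiv.natSumPUnitEquivNat fun n => ?_
    rcases n with n | _
    · exact Finsupp.single_add i n 1
    · exact Finsupp.single_zero i
  linear_combination h

def listEquivSumProd (α : Type*) : List α ≃ Unit ⊕ α × List α where
  toFun
    | [] => .inl ()
    | a :: l => .inr (a, l)
  invFun
    | .inl _ => []
    | .inr (a, l) => a :: l
  left_inv l := by cases l <;> rfl
  right_inv x := by rcases x with _ | ⟨a, l⟩ <;> rfl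

theorem Function.FiniteFibers.listSum {w : α → σ →₀ ℕ} (h : w.FiniteFibers) (hw : ∀ a, w a ≠ 0) :
    (fun l : List α => (l.map w).sum).FiniteFibers := by
  classical
  intro m
  induction m using WellFoundedLT.induction with
  | _ m ih =>
    have hcover : {l : List α | (l.map w).sum = m} ⊆ {[]} ∪
        ⋃ n ∈ {n | n ≤ m ∧ n ≠ 0}, Set.image2 List.cons {a | w a = n}
          {l : List α | (l.map w).sum = m - n} := by
      rintro (_ | ⟨a, l⟩) hl
      · exact .inl rfl
      · change (List.map w (a :: l)).sum = m at hl
        rw [List.map_cons, List.sum_cons] at hl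
        refine .inr (Set.mem_iUnion₂.2 ⟨w a, ⟨hl ▸ le_self_add, hw a⟩, a, rfl, l, ?_, rfl⟩)
        exact eq_tsub_of_add_eq (add_comm (w a) _ ▸ hl)
    refine Set.finite_coe_iff.2 (((Set.finite_singleton _).union ?_).subset hcover)
    refine ((Set.finite_Iic m).subset fun n hn => hn.1).biUnion fun n hn => ?_
    have hlt : m - n < m := by
      refine tsub_le_self.lt_of_ne fun hmn => hn.2 (add_eq_left (a := m).1 ?_)
      rw [← hmn, tsub_add_cancel_of_le hn.1, hmn]
    exact ((Set.finite_coe_iff (s := {a | w a = n})).1 (h n)).image2 _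
      ((Set.finite_coe_iff (s := {l : List α | (l.map w).sum = m - n})).1 (ih _ hlt))

theorem genFun_listSum [DecidableEq σ] {w : α → σ →₀ ℕ} (h : w.FiniteFibers) (hw : ∀ a, w a ≠ 0) :
    genFun R (fun l : List α => (l.map w).sum) =
      1 + genFun R w * genFun R (fun l : List α => (l.map w).sum) := by
  rw [← genFun_prod h (h.listSum hw), ← monomial_zero_one, ← genFun_const (R := R),
    ← genFun_sumElim (fun _ => inferInstance) (h.prod (h.listSum hw))]
  exact genFun_congr (listEquivSumProd α).symm fun x => by rcases x with _ | ⟨a, l⟩ <;> rfl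

end GenFun

namespace DyckPath

open MvPowerSeries

/-! ### Heights and valleys from an arbitrary starting height -/

@[simp] theorem stepVal_true : stepVal true = 1 := rfl

@[simp] theorem stepVal_false : stepVal false = -1 := rfl

def heightsFrom (h : ℤ) (p : List Bool) : List ℤ := p.scanl (fun h b => h + stepVal b) h

def valleyLevelsFrom (h : ℤ) (p : List Bool) : List ℤ :=
  ((p.zip p.tail).zip (heightsFrom h p).tail).filterMap
    (fun x => if x.1.1 = false ∧ x.1.2 = true then some x.2 else none)

theorem heights_eq_heightsFrom (p : List Bool) : heights p = heightsFrom 0 p := rfl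

theorem valleyLevels_eq_valleyLevelsFrom (p : List Bool) :
    valleyLevels p = valleyLevelsFrom 0 p := rfl

@[simp] theorem heightsFrom_nil (h : ℤ) : heightsFrom h [] = [h] := rfl

@[simp] theorem heightsFrom_cons (h : ℤ) (b : Bool) (p : List Bool) :
    heightsFrom h (b :: p) = h :: heightsFrom (h + stepVal b) p := List.scanl_cons

theorem mem_heightsFrom_append_left {h y : ℤ} {p : List Bool} (q : List Bool)
    (hy : y ∈ heightsFrom h p) : y ∈ heightsFrom h (p ++ q) := by
  induction p generalizing h with
  | nil => cases q <;> simp_all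
  | cons b p ih => simp only [heightsFrom_cons, List.cons_append, List.mem_cons] at hy ⊢; tauto

theorem endpoint_mem_heightsFrom (h : ℤ) (p : List Bool) :
    h + p.count true - p.count false ∈ heightsFrom h p := by
  induction p generalizing h with
  | nil => simp
  | cons b p ih =>
    rw [heightsFrom_cons]
    refine List.mem_cons_of_mem _ ?_
    convert ih (h + stepVal b) using 1
    cases b <;> simp <;> omega

theorem mem_heightsFrom_replicate_true_append {h y : ℤ} {n : ℕ} {r : List Bool}
    (hy : y ∈ heightsFrom h (List.replicate n true ++ r)) : h ≤ y ∨ y ∈ heightsFrom (h + n) r := by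
  induction n generalizing h with
  | zero => simp_all
  | succ n ih =>
    simp only [List.replicate_succ, List.cons_append, heightsFrom_cons, stepVal_true,
      List.mem_cons] at hy
    rcases hy with rfl | hy
    · exact .inl le_rfl
    · rcases ih hy with hy | hy
      · exact .inl (by omega)
      · right
        convert hy using 2
        push_cast
        ring

theorem mem_heightsFrom_replicate_false_append {h y : ℤ} {n : ℕ} {r : List Bool}
    (hy : y ∈ heightsFrom h (List.replicate n false ++ r)) :
    h - n ≤ y ∨ y ∈ heightsFrom (h - n) r := by
  induction n generalizing h with
  | zero => simp_all
  | succ n ih =>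
    simp only [List.replicate_succ, List.cons_append, heightsFrom_cons, stepVal_false,
      List.mem_cons] at hy
    rcases hy with rfl | hy
    · exact .inl (by omega)
    · rcases ih hy with hy | hy
      · exact .inl (by omega)
      · right
        convert hy using 2
        push_cast
        ring

theorem valleyLevelsFrom_cons_cons (h : ℤ) (b c : Bool) (p : List Bool) :
    valleyLevelsFrom h (b :: c :: p) =
      (if b = false ∧ c = true then [h + stepVal b] else []) ++
        valleyLevelsFrom (h + stepVal b) (c :: p) := by
  simp only [valleyLevelsFrom, heightsFrom_cons, List.tail_cons, List.zip_cons_cons,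
    List.filterMap_cons]
  split_ifs <;> rfl

@[simp] theorem valleyLevelsFrom_nil (h : ℤ) : valleyLevelsFrom h [] = [] := rfl

theorem valleyLevelsFrom_true_cons (h : ℤ) (p : List Bool) :
    valleyLevelsFrom h (true :: p) = valleyLevelsFrom (h + 1) p := by
  cases p with
  | nil => rfl
  | cons c p => simp [valleyLevelsFrom_cons_cons]

theorem mem_heights_of_mem_valleyLevels {p : List Bool} {v : ℤ} (hv : v ∈ valleyLevels p) :
    v ∈ heights p := by
  obtain ⟨x, hx, hxv⟩ := List.mem_filterMap.1 hv
  split_ifs at hxv with h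
  cases hxv
  exact List.mem_of_mem_tail (List.of_mem_zip hx).2

theorem peaks_cons_cons (b c : Bool) (p : List Bool) :
    peaks (b :: c :: p) = peaks (c :: p) + if (b && !c) then 1 else 0 := by
  simp [peaks, List.countP_cons]

/-! ### Paths as sequences of blocks -/

/-- The block `U^{i+1} D^{j+1}` coded by `(i, j)`. -/
def block (B : ℕ × ℕ) : List Bool :=
  List.replicate (B.1 + 1) true ++ List.replicate (B.2 + 1) false

def ofBlocks (L : List (ℕ × ℕ)) : List Bool := L.flatMap block

def rise (B : ℕ × ℕ) : ℤ := (B.1 : ℤ) - B.2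

@[simp] theorem ofBlocks_nil : ofBlocks [] = [] := rfl

@[simp] theorem ofBlocks_cons (B : ℕ × ℕ) (L : List (ℕ × ℕ)) :
    ofBlocks (B :: L) = block B ++ ofBlocks L := List.flatMap_cons

theorem head?_ofBlocks_ne_some_false (L : List (ℕ × ℕ)) : (ofBlocks L).head? ≠ some false := by
  cases L <;> simp [block, List.replicate_succ]

theorem replicate_append_inj {α : Type*} {a : α} {m n : ℕ} {s t : List α}
    (hs : s.head? ≠ some a) (ht : t.head? ≠ some a) (h : List.replicate m a ++ s = List.replicate n a ++ t) :
    m = n ∧ s = t := by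
  induction m generalizing n with
  | zero => cases n <;> simp_all [List.replicate_succ]
  | succ m ih =>
    cases n with
    | zero => subst h; simp [List.replicate_succ] at ht
    | succ n =>
      simp only [List.replicate_succ, List.cons_append, List.cons.injEq] at h
      simpa using ih h.2

theorem ofBlocks_injective : Function.Injective ofBlocks := by
  intro L
  induction L with
  | nil => rintro (_ | ⟨B, M⟩) h <;> simp_all [block, List.replicate_succ]
  | cons B L ih =>
    rintro (_ | ⟨B', M⟩) h
    · simp [block, List.replicate_succ] at h
    · simp only [ofBlocks_cons, block, List.append_assoc] at h
      obtain ⟨h1, h⟩ := replicate_append_inj (by simp [List.replicate_succ])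
        (by simp [List.replicate_succ]) h
      obtain ⟨h2, h⟩ := replicate_append_inj (head?_ofBlocks_ne_some_false L)
        (head?_ofBlocks_ne_some_false M) h
      rw [ih h, Prod.ext (by omega) (by omega : B.2 = B'.2)]

theorem exists_eq_replicate_append_ofBlocks_append (p : List Bool) :
    ∃ a L c, p = List.replicate a false ++ ofBlocks L ++ List.replicate c true := by
  induction p with
  | nil => exact ⟨0, [], 0, rfl⟩
  | cons b p ih =>
    obtain ⟨a, L, c, rfl⟩ := ih
    cases b
    · exact ⟨a + 1, L, c, rfl⟩
    rcases a with _ | a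
    · rcases L with _ | ⟨⟨i, j⟩, L⟩
      · exact ⟨0, [], c + 1, rfl⟩
      · exact ⟨0, (i + 1, j) :: L, c, by simp [block, List.replicate_succ]⟩
    · exact ⟨0, (0, a) :: L, c, by simp [block, List.replicate_succ]⟩

theorem exists_ofBlocks_eq {p : List Bool} (hhead : p.head? ≠ some false)
    (hlast : p.getLast? ≠ some true) : ∃ L, ofBlocks L = p := by
  obtain ⟨a, L, c, rfl⟩ := exists_eq_replicate_append_ofBlocks_append p
  rcases a with _ | a
  · rcases c with _ | c
    · exact ⟨L, by simp⟩
    · simp [List.getLast?_append, List.replicate_succ'] at hlast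
  · simp [List.replicate_succ] at hhead

theorem count_true_block (B : ℕ × ℕ) : (block B).count true = B.1 + 1 := by
  simp [block, List.count_replicate]

theorem count_false_block (B : ℕ × ℕ) : (block B).count false = B.2 + 1 := by
  simp [block, List.count_replicate]

theorem count_ofBlocks_true (L : List (ℕ × ℕ)) :
    (ofBlocks L).count true = (L.map fun B => B.1 + 1).sum := by
  induction L with
  | nil => rfl
  | cons B L ih => rw [ofBlocks_cons, List.count_append, count_true_block, ih]; rfl

theorem count_true_sub_count_false_ofBlocks (L : List (ℕ × ℕ)) :
    ((ofBlocks L).count true : ℤ) - (ofBlocks L).count false = (L.map rise).sum := by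
  induction L with
  | nil => rfl
  | cons B L ih =>
    rw [ofBlocks_cons, List.count_append, List.count_append, count_true_block, count_false_block,
      List.map_cons, List.sum_cons, ← ih, rise]
    push_cast
    ring

theorem peaks_false_cons (p : List Bool) : peaks (false :: p) = peaks p := by
  cases p with
  | nil => rfl
  | cons c p => simp [peaks_cons_cons]

theorem peaks_replicate_false_append (n : ℕ) (p : List Bool) :
    peaks (List.replicate n false ++ p) = peaks p := by
  induction n with
  | zero => rfl
  | succ n ih => rw [List.replicate_succ, List.cons_append, peaks_false_cons, ih]

theorem peaks_replicate_true_append_false_cons (n : ℕ) (p : List Bool) :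
    peaks (List.replicate (n + 1) true ++ false :: p) = peaks p + 1 := by
  induction n with
  | zero => simp [peaks_cons_cons, peaks_false_cons]
  | succ n ih =>
    simp only [List.replicate_succ, List.cons_append] at ih ⊢
    rw [peaks_cons_cons]
    simpa using ih

theorem peaks_ofBlocks (L : List (ℕ × ℕ)) : peaks (ofBlocks L) = L.length := by
  induction L with
  | nil => rfl
  | cons B L ih =>
    rw [ofBlocks_cons, block, List.append_assoc, List.replicate_succ (a := false),
      List.cons_append, peaks_replicate_true_append_false_cons, peaks_replicate_false_append, ih,
      List.length_cons]

theorem valleyLevelsFrom_replicate_true_append (h : ℤ) (n : ℕ) (p : List Bool) :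
    valleyLevelsFrom h (List.replicate n true ++ p) = valleyLevelsFrom (h + n) p := by
  induction n generalizing h with
  | zero => simp
  | succ n ih =>
    rw [List.replicate_succ, List.cons_append, valleyLevelsFrom_true_cons, ih]
    congr 1
    push_cast
    ring

theorem valleyLevelsFrom_replicate_false (h : ℤ) (n : ℕ) :
    valleyLevelsFrom h (List.replicate n false) = [] := by
  induction n generalizing h with
  | zero => rfl
  | succ n ih =>
    cases n with
    | zero => rfl
    | succ n => rw [List.replicate_succ, List.replicate_succ, valleyLevelsFrom_cons_cons,
        ← List.replicate_succ, ih]; rfl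

theorem valleyLevelsFrom_replicate_false_append_true_cons (h : ℤ) (n : ℕ) (p : List Bool) :
    valleyLevelsFrom h (List.replicate (n + 1) false ++ true :: p) =
      (h - (n + 1)) :: valleyLevelsFrom (h - (n + 1)) (true :: p) := by
  induction n generalizing h with
  | zero => simp [valleyLevelsFrom_cons_cons, sub_eq_add_neg]
  | succ n ih =>
    rw [List.replicate_succ, List.cons_append, List.replicate_succ, List.cons_append,
      valleyLevelsFrom_cons_cons, ← List.cons_append, ← List.replicate_succ, ih]
    have hstep : h + stepVal false - (n + 1) = h - ((n + 1 : ℕ) + 1) := by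
      rw [stepVal_false]
      push_cast
      ring
    rw [hstep]
    rfl

theorem valleyLevelsFrom_block (h : ℤ) (B : ℕ × ℕ) : valleyLevelsFrom h (block B) = [] := by
  rw [block, valleyLevelsFrom_replicate_true_append, valleyLevelsFrom_replicate_false]

theorem valleyLevelsFrom_block_append_true_cons (h : ℤ) (B : ℕ × ℕ) (p : List Bool) :
    valleyLevelsFrom h (block B ++ true :: p) =
      (h + rise B) :: valleyLevelsFrom (h + rise B) (true :: p) := by
  rw [block, List.append_assoc, valleyLevelsFrom_replicate_true_append,
    valleyLevelsFrom_replicate_false_append_true_cons, rise]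
  rw [show h + ((B.1 + 1 : ℕ) : ℤ) - (B.2 + 1) = h + (B.1 - B.2) by push_cast; ring]

theorem ofBlocks_cons_eq_true_cons (B : ℕ × ℕ) (L : List (ℕ × ℕ)) :
    ∃ p, ofBlocks (B :: L) = true :: p :=
  ⟨_, by rw [ofBlocks_cons, block, List.replicate_succ, List.cons_append, List.cons_append]⟩

theorem valleyLevelsFrom_ofBlocks_cons_of_ne_nil (h : ℤ) (B : ℕ × ℕ) {L : List (ℕ × ℕ)}
    (hL : L ≠ []) :
    valleyLevelsFrom h (ofBlocks (B :: L)) =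
      (h + rise B) :: valleyLevelsFrom (h + rise B) (ofBlocks L) := by
  obtain ⟨B', L, rfl⟩ := List.exists_cons_of_ne_nil hL
  obtain ⟨p, hp⟩ := ofBlocks_cons_eq_true_cons B' L
  rw [ofBlocks_cons, hp, valleyLevelsFrom_block_append_true_cons]

theorem valleyLevelsFrom_ofBlocks_singleton (h : ℤ) (B : ℕ × ℕ) :
    valleyLevelsFrom h (ofBlocks [B]) = [] := by
  rw [ofBlocks_cons, ofBlocks_nil, List.append_nil, valleyLevelsFrom_block]

theorem valleyLevelsFrom_ofBlocks_cons_append_singleton (h : ℤ) (B C : ℕ × ℕ)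
    (M : List (ℕ × ℕ)) :
    valleyLevelsFrom h (ofBlocks (B :: (M ++ [C]))) = (M.map rise).scanl (· + ·) (h + rise B) := by
  induction M generalizing h B with
  | nil =>
    rw [List.nil_append, valleyLevelsFrom_ofBlocks_cons_of_ne_nil _ _ (List.cons_ne_nil _ _),
      valleyLevelsFrom_ofBlocks_singleton]
    rfl
  | cons B' M ih =>
    rw [List.cons_append, valleyLevelsFrom_ofBlocks_cons_of_ne_nil _ _ (List.cons_ne_nil _ _),
      ih, List.map_cons, List.scanl_cons]

theorem mem_heightsFrom_block_append {h y : ℤ} {B : ℕ × ℕ} {p : List Bool}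
    (hy : y ∈ heightsFrom h (block B ++ p)) :
    min h (h + rise B) ≤ y ∨ y ∈ heightsFrom (h + rise B) p := by
  rw [block, List.append_assoc] at hy
  rcases mem_heightsFrom_replicate_true_append hy with hy | hy
  · exact .inl (min_le_of_left_le hy)
  rcases mem_heightsFrom_replicate_false_append hy with hy | hy
  · left; apply min_le_of_right_le; rw [rise]; push_cast at hy ⊢; linarith
  · right; convert hy using 2; rw [rise]; push_cast; ring

/-- The minima of a block path are its endpoints and its valleys. -/
theorem heightsFrom_ofBlocks_nonneg (L : List (ℕ × ℕ)) {h : ℤ} (h0 : 0 ≤ h)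
    (hend : 0 ≤ h + (L.map rise).sum) (hval : ∀ v ∈ valleyLevelsFrom h (ofBlocks L), 0 ≤ v) :
    ∀ y ∈ heightsFrom h (ofBlocks L), 0 ≤ y := by
  induction L generalizing h with
  | nil => simpa using h0
  | cons B L ih =>
    have hvalB : 0 ≤ h + rise B ∧ ∀ v ∈ valleyLevelsFrom (h + rise B) (ofBlocks L), 0 ≤ v := by
      rcases eq_or_ne L [] with rfl | hL
      · simpa using hend
      · rw [valleyLevelsFrom_ofBlocks_cons_of_ne_nil h B hL] at hval
        simpa using hval
    intro y hy
    rw [ofBlocks_cons] at hy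
    rcases mem_heightsFrom_block_append hy with hy | hy
    · exact (le_min h0 hvalB.1).trans hy
    · exact ih hvalB.1 (by simpa [add_assoc] using hend) hvalB.2 y hy

/-! ### Dyck paths and `d`-Dyck paths in terms of blocks -/

theorem _root_.IsDyck.head?_ne_some_false {p : List Bool} (hp : IsDyck p) :
    p.head? ≠ some false := by
  intro h
  obtain ⟨t, rfl⟩ : ∃ t, p = false :: t := by cases p <;> simp_all
  have hneg := hp.2 (-1) (by cases t <;> simp [heights_eq_heightsFrom])
  omega

theorem _root_.IsDyck.getLast?_ne_some_true {p : List Bool} (hp : IsDyck p) :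
    p.getLast? ≠ some true := by
  intro h
  obtain ⟨q, rfl⟩ : ∃ q, p = q ++ [true] := by
    rcases p.eq_nil_or_concat' with rfl | ⟨q, b, rfl⟩ <;> simp_all
  have hend := hp.2 _ (mem_heightsFrom_append_left [true] (endpoint_mem_heightsFrom 0 q))
  have hcount : q.count true + 1 = q.count false := by simpa using hp.1
  omega

theorem _root_.IsDyck.exists_ofBlocks_eq {p : List Bool} (hp : IsDyck p) : ∃ L, ofBlocks L = p :=
  DyckPath.exists_ofBlocks_eq hp.head?_ne_some_false hp.getLast?_ne_some_true

theorem isDyck_ofBlocks_iff {L : List (ℕ × ℕ)} :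
    IsDyck (ofBlocks L) ↔ (L.map rise).sum = 0 ∧ ∀ v ∈ valleyLevels (ofBlocks L), 0 ≤ v := by
  have hcount : (ofBlocks L).count true = (ofBlocks L).count false ↔ (L.map rise).sum = 0 := by
    rw [← count_true_sub_count_false_ofBlocks]; omega
  refine ⟨fun hp => ⟨hcount.1 hp.1, fun v hv => hp.2 v (mem_heights_of_mem_valleyLevels hv)⟩,
    fun ⟨hsum, hval⟩ => ⟨hcount.2 hsum, ?_⟩⟩
  exact heightsFrom_ofBlocks_nonneg L le_rfl (by simp [hsum]) hval

theorem isChain_scanl_add_iff {d a : ℤ} {l : List ℤ} :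
    (l.scanl (· + ·) a).IsChain (fun x y => d ≤ y - x) ↔ ∀ x ∈ l, d ≤ x := by
  induction l generalizing a with
  | nil => simp
  | cons x l ih =>
    cases l <;> simp_all [List.scanl_cons]

theorem le_of_mem_scanl_add {a v : ℤ} {l : List ℤ} (hl : ∀ x ∈ l, 0 ≤ x)
    (hv : v ∈ l.scanl (· + ·) a) : a ≤ v := by
  induction l generalizing a with
  | nil => simp_all
  | cons x l ih =>
    rw [List.forall_mem_cons] at hl
    rw [List.scanl_cons, List.mem_cons] at hv
    rcases hv with rfl | hv
    · exact le_rfl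
    · linarith [ih hl.2 hv]

theorem restrictedD_ofBlocks_cons_append_singleton_iff {d : ℤ} {B C : ℕ × ℕ}
    {M : List (ℕ × ℕ)} : RestrictedD d (ofBlocks (B :: (M ++ [C]))) ↔ ∀ m ∈ M, d ≤ rise m := by
  rw [RestrictedD, List.Chain', valleyLevels_eq_valleyLevelsFrom,
    valleyLevelsFrom_ofBlocks_cons_append_singleton, isChain_scanl_add_iff, List.forall_mem_map]

/-- Codes of `d`-Dyck paths: the empty path; a single block `U^{i+1}D^{i+1}`; or a first block
`(j + e, j)` rising by `e`, a list of middle blocks `(j + d + e, j)` rising by `d + e`, and a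
last block `U^{i+1}D^{*}` returning to the axis. -/
abbrev DyckCode := Unit ⊕ ℕ ⊕ (ℕ × ℕ) × List (ℕ × ℕ) × ℕ

def middleBlock (d : ℕ) (m : ℕ × ℕ) : ℕ × ℕ := (m.1 + d + m.2, m.1)

def codeBlocks (d : ℕ) : DyckCode → List (ℕ × ℕ)
  | .inl _ => []
  | .inr (.inl i) => [(i, i)]
  | .inr (.inr ((j, e), M, i)) =>
      (j + e, j) :: (M.map (middleBlock d) ++ [(i, i + e + (M.map fun m => d + m.2).sum)])

theorem middleBlock_injective (d : ℕ) : Function.Injective (middleBlock d) := by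
  intro m m' h
  simp only [middleBlock, Prod.mk.injEq] at h
  exact Prod.ext h.2 (by omega)

theorem rise_middleBlock (d : ℕ) (m : ℕ × ℕ) : rise (middleBlock d m) = ((d + m.2 : ℕ) : ℤ) := by
  rw [rise, middleBlock]
  push_cast
  ring

theorem sum_map_rise_middleBlock (d : ℕ) (M : List (ℕ × ℕ)) :
    ((M.map (middleBlock d)).map rise).sum = (((M.map fun m => d + m.2).sum : ℕ) : ℤ) := by
  simp only [List.map_map, Function.comp_def, rise_middleBlock, Nat.cast_list_sum]

theorem codeBlocks_injective (d : ℕ) : Function.Injective (codeBlocks d) := by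
  rintro (_ | i | ⟨⟨j, e⟩, M, i⟩) (_ | i' | ⟨⟨j', e'⟩, M', i'⟩) h <;>
    simp [codeBlocks] at h
  · rfl
  · rw [h]
  · obtain ⟨⟨he, rfl⟩, hM, rfl, -⟩ := h
    rw [List.map_injective_iff.2 (middleBlock_injective d) hM, show e = e' by omega]

theorem isDyck_ofBlocks_codeBlocks (d : ℕ) (x : DyckCode) :
    IsDyck (ofBlocks (codeBlocks d x)) ∧ RestrictedD d (ofBlocks (codeBlocks d x)) := by
  rcases x with _ | i | ⟨⟨j, e⟩, M, i⟩ <;> simp only [codeBlocks]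
  · exact ⟨isDyck_ofBlocks_iff.2 ⟨rfl, by simp [valleyLevels]⟩, List.isChain_nil⟩
  · have hval : valleyLevels (ofBlocks [(i, i)]) = [] := valleyLevelsFrom_ofBlocks_singleton 0 _
    refine ⟨isDyck_ofBlocks_iff.2 ⟨by simp [rise], by rw [hval]; simp⟩, ?_⟩
    rw [RestrictedD, hval]
    exact List.isChain_nil
  · have hrise : ∀ m ∈ M.map (middleBlock d), (d : ℤ) ≤ rise m := by
      intro m hm
      obtain ⟨m, -, rfl⟩ := List.mem_map.1 hm
      rw [rise_middleBlock]
      exact_mod_cast Nat.le_add_right d _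
    refine ⟨isDyck_ofBlocks_iff.2 ⟨?_, fun v hv => ?_⟩,
      restrictedD_ofBlocks_cons_append_singleton_iff.2 hrise⟩
    · simp only [List.map_cons, List.map_append, List.sum_cons, List.sum_append,
        sum_map_rise_middleBlock, List.map_nil, List.sum_nil, rise]
      push_cast
      ring
    · rw [valleyLevels_eq_valleyLevelsFrom, valleyLevelsFrom_ofBlocks_cons_append_singleton] at hv
      have hv := le_of_mem_scanl_add
        (List.forall_mem_map.2 fun m hm => (Int.natCast_nonneg _).trans (hrise m hm)) hv
      rw [zero_add, rise] at hv
      push_cast at hv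
      omega

theorem exists_codeBlocks_eq {d : ℕ} {L : List (ℕ × ℕ)} (hL : IsDyck (ofBlocks L))
    (hr : RestrictedD d (ofBlocks L)) : ∃ x, codeBlocks d x = L := by
  obtain ⟨hsum, hval⟩ := isDyck_ofBlocks_iff.1 hL
  rcases L with _ | ⟨B, L⟩
  · exact ⟨.inl (), rfl⟩
  rcases L.eq_nil_or_concat' with rfl | ⟨M, C, rfl⟩
  · refine ⟨.inr (.inl B.1), ?_⟩
    simp only [List.map_cons, List.map_nil, List.sum_cons, List.sum_nil, add_zero, rise] at hsum
    simp only [codeBlocks, List.cons.injEq, and_true]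
    exact Prod.ext rfl (by omega)
  have hM := restrictedD_ofBlocks_cons_append_singleton_iff.1 hr
  have hB : 0 ≤ rise B := by
    rw [valleyLevels_eq_valleyLevelsFrom, valleyLevelsFrom_ofBlocks_cons_append_singleton,
      zero_add] at hval
    exact hval _ (by cases M <;> simp)
  set M₀ := M.map fun m => (m.2, m.1 - m.2 - d)
  have hM₀ : M₀.map (middleBlock d) = M := by
    rw [List.map_map]
    conv_rhs => rw [← List.map_id M]
    refine List.map_congr_left fun m hm => ?_
    have := hM m hm
    simp only [rise] at this
    exact Prod.ext (show m.2 + d + (m.1 - m.2 - d) = m.1 by omega) rfl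
  have hsumM := sum_map_rise_middleBlock d M₀
  rw [hM₀] at hsumM
  refine ⟨.inr (.inr ((B.2, B.1 - B.2), M₀, C.1)), ?_⟩
  simp only [codeBlocks, hM₀]
  simp only [List.map_cons, List.map_append, List.sum_cons, List.sum_append, List.map_nil,
    List.sum_nil, rise] at hsum hB
  congr 1
  · exact Prod.ext (by omega) rfl
  · congr 2
    exact Prod.ext rfl (by omega)

theorem range_ofBlocks_codeBlocks (d : ℕ) :
    Set.range (fun x => ofBlocks (codeBlocks d x)) = {p | IsDyck p ∧ RestrictedD d p} := by
  ext p
  constructor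
  · rintro ⟨x, rfl⟩
    exact isDyck_ofBlocks_codeBlocks d x
  · rintro ⟨hp, hr⟩
    obtain ⟨L, rfl⟩ := hp.exists_ofBlocks_eq
    obtain ⟨x, rfl⟩ := exists_codeBlocks_eq hp hr
    exact ⟨x, rfl⟩

/-! ### Counting by semilength and peaks -/

noncomputable def bideg (a b : ℕ) : Fin 2 →₀ ℕ := Finsupp.single 0 a + Finsupp.single 1 b

theorem bideg_eq_iff {a b : ℕ} {m : Fin 2 →₀ ℕ} : bideg a b = m ↔ a = m 0 ∧ b = m 1 := by
  constructor
  · rintro rfl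
    simp [bideg]
  · rintro ⟨rfl, rfl⟩
    ext k
    fin_cases k <;> simp [bideg]

theorem bideg_add (a b a' b' : ℕ) : bideg (a + a') (b + b') = bideg a b + bideg a' b' := by
  simp only [bideg, Finsupp.single_add]
  abel

theorem sum_map_bideg {γ : Type*} (l : List γ) (f g : γ → ℕ) :
    (l.map fun x => bideg (f x) (g x)).sum = bideg (l.map f).sum (l.map g).sum := by
  induction l with
  | nil => simp [bideg]
  | cons x l ih => rw [List.map_cons, List.sum_cons, ih, ← bideg_add]; rfl

theorem monomial_bideg (a b : ℕ) : monomial (bideg a b) (1 : ℚ) = X 0 ^ a * X 1 ^ b := by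
  rw [X_pow_eq, X_pow_eq, monomial_mul_monomial, one_mul, bideg]

theorem Lbiv_eq_genFun (d : ℕ) :
    Lbiv d = genFun ℚ (fun x => bideg (semilength (ofBlocks (codeBlocks d x)))
      (peaks (ofBlocks (codeBlocks d x)))) := by
  ext m
  have hset : {p | IsDyck p ∧ RestrictedD d p ∧ semilength p = m 0 ∧ peaks p = m 1} =
      (fun x => ofBlocks (codeBlocks d x)) '' {x | bideg (semilength (ofBlocks (codeBlocks d x)))
        (peaks (ofBlocks (codeBlocks d x))) = m} := by
    ext p
    constructor
    · rintro ⟨hp, hr, h0, h1⟩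
      have hrange : p ∈ Set.range fun x => ofBlocks (codeBlocks d x) := by
        rw [range_ofBlocks_codeBlocks]
        exact ⟨hp, hr⟩
      obtain ⟨x, rfl⟩ := hrange
      exact ⟨x, bideg_eq_iff.2 ⟨h0, h1⟩, rfl⟩
    · rintro ⟨x, hx, rfl⟩
      exact ⟨(isDyck_ofBlocks_codeBlocks d x).1, (isDyck_ofBlocks_codeBlocks d x).2,
        bideg_eq_iff.1 hx⟩
  rw [coeff_genFun]
  change (Set.ncard _ : ℚ) = _
  rw [hset, Set.ncard_image_of_injective (f := fun x => ofBlocks (codeBlocks d x)) _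
    (ofBlocks_injective.comp (codeBlocks_injective d))]
  rfl

noncomputable def pairWeight (p : ℕ × ℕ) : Fin 2 →₀ ℕ :=
  Finsupp.single 0 p.1 + Finsupp.single 0 p.2

noncomputable def middleWeight (d : ℕ) (m : ℕ × ℕ) : Fin 2 →₀ ℕ := pairWeight m + bideg (d + 1) 1

noncomputable def codeWeight (d : ℕ) : DyckCode → Fin 2 →₀ ℕ :=
  Sum.elim (fun _ => 0) <| Sum.elim (fun i => Finsupp.single 0 i + bideg 1 1) fun t =>
    (pairWeight t.1 + bideg 1 1) +
      ((t.2.1.map (middleWeight d)).sum + (Finsupp.single 0 t.2.2 + bideg 1 1))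

theorem single_zero_eq_bideg (a : ℕ) : Finsupp.single 0 a = bideg a 0 := by simp [bideg]

theorem middleWeight_eq_bideg (d : ℕ) (m : ℕ × ℕ) :
    middleWeight d m = bideg (m.1 + d + m.2 + 1) 1 := by
  rw [middleWeight, pairWeight, single_zero_eq_bideg, single_zero_eq_bideg, ← bideg_add,
    ← bideg_add]
  congr 1
  ring

theorem bideg_codeBlocks (d : ℕ) (x : DyckCode) :
    bideg (semilength (ofBlocks (codeBlocks d x))) (peaks (ofBlocks (codeBlocks d x))) =
      codeWeight d x := by
  rw [semilength, count_ofBlocks_true, peaks_ofBlocks]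
  rcases x with _ | i | ⟨⟨j, e⟩, M, i⟩
  · simp [bideg, codeBlocks, codeWeight]
  · simp only [codeBlocks, codeWeight, Sum.elim_inr, Sum.elim_inl, single_zero_eq_bideg,
      ← bideg_add]
    rfl
  · simp only [codeBlocks, codeWeight, Sum.elim_inr, pairWeight, single_zero_eq_bideg,
      funext (middleWeight_eq_bideg d), sum_map_bideg, ← bideg_add]
    simp only [List.map_cons, List.map_append, List.map_map, List.map_nil, Function.comp_def,
      middleBlock, List.sum_cons, List.sum_append, List.sum_nil, List.sum_map_add, List.map_const',
      List.sum_replicate, smul_eq_mul, mul_one, add_zero, List.length_cons, List.length_append,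
      List.length_map, List.length_nil, zero_add]
    congr 1
    ring

theorem finiteFibers_pairWeight : pairWeight.FiniteFibers :=
  (Finsupp.single_injective 0).finiteFibers.prod (Finsupp.single_injective 0).finiteFibers

theorem finiteFibers_middleWeight (d : ℕ) : (middleWeight d).FiniteFibers :=
  finiteFibers_pairWeight.add_const _

theorem middleWeight_ne_zero (d : ℕ) (m : ℕ × ℕ) : middleWeight d m ≠ 0 := by
  rw [middleWeight_eq_bideg]
  exact fun h => by simpa using (bideg_eq_iff.1 h).2

theorem genFun_pairWeight : genFun ℚ pairWeight = genFun ℚ (Finsupp.single 0) ^ 2 := by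
  have hG : (Finsupp.single (0 : Fin 2) : ℕ → _).FiniteFibers :=
    (Finsupp.single_injective 0).finiteFibers
  rw [sq, ← genFun_prod hG hG]
  rfl

theorem genFun_middleWeight (d : ℕ) :
    genFun ℚ (middleWeight d) = genFun ℚ (Finsupp.single 0) ^ 2 * (X 0 ^ (d + 1) * X 1) := by
  change genFun ℚ (fun m => pairWeight m + bideg (d + 1) 1) = _
  rw [genFun_add_const finiteFibers_pairWeight, genFun_pairWeight, monomial_bideg, pow_one]

theorem genFun_codeWeight (d : ℕ) :
    genFun ℚ (codeWeight d) = 1 + (genFun ℚ (Finsupp.single 0) * (X 0 * X 1) +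
      genFun ℚ (Finsupp.single 0) ^ 2 * (X 0 * X 1) *
        (genFun ℚ (fun M : List (ℕ × ℕ) => (M.map (middleWeight d)).sum) *
          (genFun ℚ (Finsupp.single 0) * (X 0 * X 1)))) := by
  have hG : (Finsupp.single (0 : Fin 2) : ℕ → _).FiniteFibers :=
    (Finsupp.single_injective 0).finiteFibers
  have hfirst := finiteFibers_pairWeight.add_const (bideg 1 1)
  have hlast := hG.add_const (bideg 1 1)
  have hmiddles := (finiteFibers_middleWeight d).listSum (middleWeight_ne_zero d)
  have htail := hmiddles.prod hlast
  rw [codeWeight, genFun_sumElim (fun _ => inferInstance) (hlast.sumElim (hfirst.prod htail)),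
    genFun_const, monomial_zero_one, genFun_sumElim hlast (hfirst.prod htail),
    genFun_prod hfirst htail, genFun_prod hmiddles hlast, genFun_add_const hG,
    genFun_add_const finiteFibers_pairWeight, genFun_pairWeight, monomial_bideg]
  ring

theorem genFun_listSum_middleWeight (d : ℕ) :
    genFun ℚ (fun M : List (ℕ × ℕ) => (M.map (middleWeight d)).sum) =
      1 + genFun ℚ (Finsupp.single 0) ^ 2 * (X 0 ^ (d + 1) * X 1) *
        genFun ℚ (fun M : List (ℕ × ℕ) => (M.map (middleWeight d)).sum) := by
  conv_lhs => rw [genFun_listSum (finiteFibers_middleWeight d) (middleWeight_ne_zero d)]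
  rw [genFun_middleWeight]

theorem Lbiv_eq (d : ℕ) :
    Lbiv d = 1 + (genFun ℚ (Finsupp.single 0) * (X 0 * X 1) +
      genFun ℚ (Finsupp.single 0) ^ 2 * (X 0 * X 1) *
        (genFun ℚ (fun M : List (ℕ × ℕ) => (M.map (middleWeight d)).sum) *
          (genFun ℚ (Finsupp.single 0) * (X 0 * X 1)))) := by
  rw [Lbiv_eq_genFun, funext (bideg_codeBlocks d), genFun_codeWeight]

end DyckPath

/-- For `d ≥ 0`,
`L_d(x,y) = 1 + xy(1-2x+x²+xy-x^{d+1}y) / ((1-x)(1-2x+x²-x^{d+1}y))`,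
stated with denominators cleared, in `ℚ[[x,y]]`. -/
theorem Lbiv_formula (d : ℕ) :
    (1 - X (0 : Fin 2)) *
        (1 - 2 * X 0 + X 0 ^ 2 - X 0 ^ (d + 1) * X 1) * (Lbiv (d : ℤ) - 1) =
      X 0 * X 1 * ((1 : MvPowerSeries (Fin 2) ℚ) - 2 * X 0 + X 0 ^ 2 +
        X 0 * X 1 - X 0 ^ (d + 1) * X 1) := by
  rw [DyckPath.Lbiv_eq]
  have hG := genFun_single_mul_one_sub_X (R := ℚ) (0 : Fin 2)
  have hM := DyckPath.genFun_listSum_middleWeight d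
  set G := genFun ℚ (Finsupp.single (0 : Fin 2))
  set M := genFun ℚ (fun l : List (ℕ × ℕ) => (l.map (DyckPath.middleWeight d)).sum)
  set u : MvPowerSeries (Fin 2) ℚ := 1 - X 0
  set c : MvPowerSeries (Fin 2) ℚ := X 0 ^ (d + 1) * X 1
  set t : MvPowerSeries (Fin 2) ℚ := X 0 * X 1
  -- `u G = 1` and `hM` give `(u² - c) M = u²`.
  linear_combination (t * (u ^ 2 - c) + t ^ 2 * ((u * G) ^ 2 + u * G + 1) +
    t ^ 2 * u * G ^ 3 * c * M * (u * G + 1)) * hG + t ^ 2 * u ^ 3 * G ^ 3 * hM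
end

section
/- Let q_n be the number of (−1)-Dyck paths of semi-length n with at least one valley whose last valley is at ground level, and let b(n) = q_n + 1 for n ≥ 1 with b(0) = 1 (counting also the pyramid U^nD^n and the empty path). Then Σ_{n≥0} b(n)x^n equals (1 − x² − √(1 − 4x + 2x² + x⁴)) / (2x(1−x)) as formal power series; equivalently, B(x) = Σ b(n)x^n satisfies x(1−x)·B(x)² − (1 − x²)·B(x) + (1 − x) = 0. -/
open PowerSeries

/-- The generating function `B(x) = Σ_n b(n) x^n`. -/
noncomputable def Bgf : PowerSeries ℚ := PowerSeries.mk fun n => (bCount n : ℚ)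

/-!
Work with Mathlib's `DyckWord`s and their first-return decomposition `p = U a D q`
(`p = a.nest + q`). The valley levels of `U a D q` are those of `a` raised by one, followed,
when `q ≠ 0`, by a valley at level `0` and then the valleys of `q`. The step from the last
raised valley `1 + v` of `a` down to that ground valley is allowed only if `v = 0`, so a
nonempty path counted by `b` is either `U a D` with `a` valley-free (a pyramid), or `U a D q`
with `q ≠ 0` and both `a` and `q` counted by `b`. With `V = 1 / (1 - x)` counting pyramids,
this gives `B = 1 + x V + x B (B - 1)`, i.e. `x (1 - x) B² - (1 - x²) B + 1 = 0`, which is the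
stated identity after completing the square.
-/

lemma scanl_stepVal_eq_map_heights (l : List Bool) (c : ℤ) :
    l.scanl (fun h b => h + stepVal b) c = (heights l).map (c + ·) := by
  induction l generalizing c with
  | nil => simp [heights]
  | cons b l ih =>
    rw [heights, List.scanl_cons, List.scanl_cons, ih, ih, List.map_cons, List.map_map]
    simp only [zero_add, add_zero, Function.comp_def, add_assoc]

lemma heights_cons (b : Bool) (l : List Bool) :
    heights (b :: l) = 0 :: (heights l).map (stepVal b + ·) := by
  rw [heights, List.scanl_cons, zero_add, scanl_stepVal_eq_map_heights]

lemma foldl_stepVal_s17 (l : List Bool) (c : ℤ) :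
    l.foldl (fun h b => h + stepVal b) c = c + l.count true - l.count false := by
  induction l generalizing c with
  | nil => simp
  | cons b l ih =>
    rw [List.foldl_cons, ih]
    cases b <;> simp [stepVal] <;> ring

lemma sum_map_stepVal (l : List Bool) :
    (l.map stepVal).sum = l.count true - l.count false := by
  simpa [List.sum_eq_foldl, List.foldl_map] using foldl_stepVal_s17 l 0

lemma isDyck_iff_count (l : List Bool) :
    IsDyck l ↔ l.count true = l.count false ∧
      ∀ i, (l.take i).count false ≤ (l.take i).count true := by
  have key : (∀ h ∈ heights l, 0 ≤ h) ↔ ∀ i, (l.take i).count false ≤ (l.take i).count true := by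
    simp only [heights, List.forall_mem_iff_getElem, List.getElem_scanl, foldl_stepVal_s17,
      List.length_scanl, zero_add, sub_nonneg, Nat.cast_le]
    refine ⟨fun h i => ?_, fun h i _ => h i⟩
    rcases lt_or_ge i (l.length + 1) with hi | hi
    · exact h i hi
    · simpa [List.take_of_length_le (show l.length ≤ i by omega)] using h l.length (by omega)
  rw [IsDyck, key]

lemma filterMap_zip_map_right {α β γ : Type*} (P : α → Prop) [DecidablePred P] (g : β → γ) :
    ∀ (l : List α) (m : List β),
      (l.zip (m.map g)).filterMap (fun x => if P x.1 then some x.2 else none) =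
        ((l.zip m).filterMap (fun x => if P x.1 then some x.2 else none)).map g
  | [], _ => by simp
  | _ :: _, [] => by simp
  | a :: l, b :: m => by
    by_cases ha : P a <;> simp [ha, filterMap_zip_map_right P g l m]

lemma valleyLevels_cons (b : Bool) (l : List Bool) :
    valleyLevels (b :: l) = (if b = false ∧ l.head? = some true then [stepVal b] else []) ++
      (valleyLevels l).map (stepVal b + ·) := by
  cases l with
  | nil => simp [valleyLevels]
  | cons c l =>
    rw [valleyLevels, heights_cons, heights_cons]
    simp only [List.tail_cons, List.map_cons, List.zip_cons_cons, List.filterMap_cons,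
      List.head?_cons, Option.some.injEq, add_zero]
    rw [filterMap_zip_map_right (fun x : Bool × Bool => x.1 = false ∧ x.2 = true),
      show (c :: l).zip l = (c :: l).zip (c :: l).tail from rfl, ← List.tail_cons (a := (0 : ℤ))
      (as := (heights l).map (stepVal c + ·)), ← heights_cons]
    split_ifs <;> simp [valleyLevels]

lemma valleyLevels_append_cons_false (r q : List Bool) :
    valleyLevels (r ++ false :: q) =
      valleyLevels r ++ (valleyLevels (false :: q)).map ((r.map stepVal).sum + ·) := by
  induction r with
  | nil => simp [valleyLevels]
  | cons b r ih =>
    rw [List.cons_append, valleyLevels_cons, ih, valleyLevels_cons b r]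
    rcases r with _ | ⟨c, r⟩
    · simp [valleyLevels]
    · simp [add_assoc]

lemma valleyLevels_true_cons_append_false_cons {a : List Bool} (q : List Bool)
    (ha : a.count true = a.count false) :
    valleyLevels (true :: (a ++ false :: q)) =
      (valleyLevels a).map (1 + ·) ++
        ((if q.head? = some true then [0] else []) ++ valleyLevels q) := by
  rw [valleyLevels_cons, valleyLevels_append_cons_false, valleyLevels_cons, sum_map_stepVal, ha]
  by_cases hq : q.head? = some true <;> simp [hq, stepVal, Function.comp_def]

lemma valleyLevels_nonneg {p : List Bool} (hp : IsDyck p) : ∀ v ∈ valleyLevels p, 0 ≤ v := by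
  intro v hv
  obtain ⟨⟨⟨c, d⟩, w⟩, hx, hxv⟩ := List.mem_filterMap.1 hv
  split_ifs at hxv with hc
  · cases hxv
    exact hp.2 _ (List.mem_of_mem_tail (List.of_mem_zip hx).2)

def IsGroundedChain (L : List ℤ) : Prop :=
  L.IsChain (fun a b => -1 ≤ b - a) ∧ ∀ v ∈ L.getLast?, v = 0

lemma restrictedD_and_noValleyOrLastGround_iff (p : List Bool) :
    RestrictedD (-1) p ∧ NoValleyOrLastGround p ↔ IsGroundedChain (valleyLevels p) := by
  refine and_congr Iff.rfl ?_
  rw [NoValleyOrLastGround]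
  generalize valleyLevels p = L
  rcases List.eq_nil_or_concat L with rfl | ⟨L, b, rfl⟩ <;> simp

lemma isGroundedChain_map_one_add {A : List ℤ} (hA : ∀ v ∈ A, 0 ≤ v) :
    IsGroundedChain (A.map (1 + ·)) ↔ A = [] := by
  refine ⟨fun ⟨_, hlast⟩ => ?_, fun h => by simp [h, IsGroundedChain]⟩
  rcases List.eq_nil_or_concat A with h | ⟨L, b, rfl⟩
  · exact h
  · have := hA b (by simp)
    have := hlast (1 + b) (by simp)
    omega

lemma isGroundedChain_map_one_add_append_zero_cons {A Q : List ℤ} (hA : ∀ v ∈ A, 0 ≤ v)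
    (hQ : ∀ v ∈ Q, 0 ≤ v) :
    IsGroundedChain (A.map (1 + ·) ++ 0 :: Q) ↔ IsGroundedChain A ∧ IsGroundedChain Q := by
  have hjunction : (∀ x ∈ (A.map (1 + ·)).getLast?, -1 ≤ 0 - x) ↔ ∀ v ∈ A.getLast?, v = 0 := by
    rcases List.eq_nil_or_concat A with h | ⟨L, b, rfl⟩
    · simp [h]
    · have := hA b (by simp)
      simp only [List.concat_eq_append, List.map_append, List.map_cons, List.map_nil,
        List.getLast?_append_of_ne_nil _ (List.cons_ne_nil _ _), List.getLast?_singleton,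
        Option.mem_def, Option.some.injEq, forall_eq']
      omega
  have hhead : ∀ y ∈ Q.head?, -1 ≤ y - 0 := fun y hy => by
    have := hQ y (List.mem_of_mem_head? hy)
    omega
  have hlast : (∀ v ∈ (A.map (1 + ·) ++ 0 :: Q).getLast?, v = 0) ↔ ∀ v ∈ Q.getLast?, v = 0 := by
    rcases List.eq_nil_or_concat Q with rfl | ⟨M, c, rfl⟩
    · simp
    · simp [List.getLast?_cons]
  rw [IsGroundedChain, List.isChain_append, List.isChain_map, List.isChain_cons,
    and_iff_right hhead, hlast, List.head?_cons]
  simp only [Option.mem_some_iff, forall_eq', hjunction, add_sub_add_left_eq_sub, IsGroundedChain]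
  tauto

namespace DyckStep

def equivBool : DyckStep ≃ Bool where
  toFun s := s = U
  invFun b := if b then U else D
  left_inv s := by cases s <;> rfl
  right_inv b := by cases b <;> rfl

lemma count_true_map_equivBool (l : List DyckStep) :
    (l.map equivBool).count true = l.count U :=
  List.count_map_of_injective _ _ equivBool.injective U

lemma count_false_map_equivBool (l : List DyckStep) :
    (l.map equivBool).count false = l.count D :=
  List.count_map_of_injective _ _ equivBool.injective D

lemma count_U_map_equivBool_symm (l : List Bool) :
    (l.map equivBool.symm).count U = l.count true :=
  List.count_map_of_injective _ _ equivBool.symm.injective true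

lemma count_D_map_equivBool_symm (l : List Bool) :
    (l.map equivBool.symm).count D = l.count false :=
  List.count_map_of_injective _ _ equivBool.symm.injective false

end DyckStep

namespace DyckWord

open DyckStep

def toBools (p : DyckWord) : List Bool := p.toList.map equivBool

lemma toBools_injective : Function.Injective toBools := fun _ _ h =>
  DyckWord.ext (List.map_injective_iff.2 equivBool.injective h)

@[simp] lemma toBools_zero : toBools 0 = [] := rfl

lemma semilength_toBools (p : DyckWord) : _root_.semilength (toBools p) = p.semilength :=
  count_true_map_equivBool _

lemma count_true_toBools_eq_count_false (p : DyckWord) :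
    (toBools p).count true = (toBools p).count false := by
  rw [toBools, count_true_map_equivBool, count_false_map_equivBool]
  exact p.count_U_eq_count_D

lemma toBools_nest_add (a q : DyckWord) :
    toBools (a.nest + q) = true :: (toBools a ++ false :: toBools q) := by
  change ([U] ++ a.toList ++ [D] ++ q.toList).map equivBool = _
  simp [toBools, equivBool]

lemma head?_toBools {q : DyckWord} (hq : q ≠ 0) : (toBools q).head? = some true := by
  rw [toBools, List.head?_map, List.head?_eq_some_head (toList_ne_nil.2 hq), head_eq_U]
  rfl

lemma isDyck_iff_mem_range_toBools (l : List Bool) : IsDyck l ↔ l ∈ Set.range toBools := by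
  rw [isDyck_iff_count]
  constructor
  · rintro ⟨hcount, hprefix⟩
    refine ⟨⟨l.map equivBool.symm, ?_, fun i => ?_⟩, ?_⟩
    · rwa [count_U_map_equivBool_symm, count_D_map_equivBool_symm]
    · rw [← List.map_take, count_U_map_equivBool_symm, count_D_map_equivBool_symm]
      exact hprefix i
    · simp [toBools]
  · rintro ⟨p, rfl⟩
    refine ⟨count_true_toBools_eq_count_false p, fun i => ?_⟩
    rw [toBools, ← List.map_take, count_true_map_equivBool, count_false_map_equivBool]
    exact p.count_D_le_count_U i

lemma valleyLevels_toBools_nest_add (a q : DyckWord) :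
    valleyLevels (toBools (a.nest + q)) = (valleyLevels (toBools a)).map (1 + ·) ++
      (if q = 0 then [] else 0 :: valleyLevels (toBools q)) := by
  rw [toBools_nest_add,
    valleyLevels_true_cons_append_false_cons _ (count_true_toBools_eq_count_false a)]
  rcases eq_or_ne q 0 with rfl | hq
  · simp [valleyLevels]
  · simp [head?_toBools hq, hq]

def IsValleyFree (p : DyckWord) : Prop := valleyLevels (toBools p) = []

def IsGrounded (p : DyckWord) : Prop := IsGroundedChain (valleyLevels (toBools p))

lemma isValleyFree_zero : IsValleyFree 0 := by simp [IsValleyFree, valleyLevels]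

lemma isGrounded_zero : IsGrounded 0 := by simp [IsGrounded, IsGroundedChain, valleyLevels]

lemma valleyLevels_toBools_nonneg (p : DyckWord) : ∀ v ∈ valleyLevels (toBools p), 0 ≤ v :=
  valleyLevels_nonneg ((isDyck_iff_mem_range_toBools _).2 ⟨p, rfl⟩)

lemma isValleyFree_nest_add {a q : DyckWord} :
    IsValleyFree (a.nest + q) ↔ IsValleyFree a ∧ q = 0 := by
  rw [IsValleyFree, IsValleyFree, valleyLevels_toBools_nest_add]
  split_ifs with hq <;> simp [hq]

lemma isGrounded_nest_add {a q : DyckWord} :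
    IsGrounded (a.nest + q) ↔ IsValleyFree a ∧ q = 0 ∨ IsGrounded a ∧ q ≠ 0 ∧ IsGrounded q := by
  rw [IsGrounded, valleyLevels_toBools_nest_add]
  rcases eq_or_ne q 0 with rfl | hq
  · simpa [IsValleyFree] using isGroundedChain_map_one_add (valleyLevels_toBools_nonneg a)
  · simpa [hq, IsGrounded] using isGroundedChain_map_one_add_append_zero_cons
      (valleyLevels_toBools_nonneg a) (valleyLevels_toBools_nonneg q)

lemma eq_zero_or_exists_eq_nest_add (p : DyckWord) : p = 0 ∨ ∃ a q : DyckWord, p = a.nest + q :=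
  or_iff_not_imp_left.2 fun hp => ⟨_, _, (nest_insidePart_add_outsidePart hp).symm⟩

@[simp] lemma insidePart_nest_add (a q : DyckWord) : (a.nest + q).insidePart = a := by
  rw [insidePart_add nest_ne_zero, insidePart_nest]

@[simp] lemma outsidePart_nest_add (a q : DyckWord) : (a.nest + q).outsidePart = q := by
  rw [outsidePart_add nest_ne_zero, outsidePart_nest, zero_add]

lemma isValleyFree_iff (p : DyckWord) :
    IsValleyFree p ↔ p = 0 ∨ p ≠ 0 ∧ IsValleyFree p.insidePart ∧ p.outsidePart = 0 := by
  obtain rfl | ⟨a, q, rfl⟩ := eq_zero_or_exists_eq_nest_add p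
  · simp [isValleyFree_zero]
  · simp [isValleyFree_nest_add]

lemma isGrounded_iff (p : DyckWord) :
    IsGrounded p ↔ p = 0 ∨ p ≠ 0 ∧ IsValleyFree p.insidePart ∧ p.outsidePart = 0 ∨
      p ≠ 0 ∧ IsGrounded p.insidePart ∧ p.outsidePart ≠ 0 ∧ IsGrounded p.outsidePart := by
  obtain rfl | ⟨a, q, rfl⟩ := eq_zero_or_exists_eq_nest_add p
  · simp [isGrounded_zero]
  · simp [isGrounded_nest_add]

lemma isGrounded_iff_eq_zero_or (p : DyckWord) :
    IsGrounded p ↔ p = 0 ∨ p ≠ 0 ∧ IsGrounded p := by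
  rcases eq_or_ne p 0 with rfl | hp <;> simp [isGrounded_zero, *]

open Finset

def ofSemilength (n : ℕ) : Finset DyckWord :=
  univ.map (Function.Embedding.subtype fun p : DyckWord => p.semilength = n)

@[simp] lemma mem_ofSemilength {n : ℕ} {p : DyckWord} :
    p ∈ ofSemilength n ↔ p.semilength = n := by
  simp [ofSemilength]

lemma eq_zero_of_semilength_eq_zero {p : DyckWord} (hp : p.semilength = 0) : p = 0 := by
  by_contra h
  have := semilength_insidePart_add_semilength_outsidePart_add_one h
  omega

lemma card_filter_nest_add (P Q : DyckWord → Prop) [DecidablePred P] [DecidablePred Q] (n : ℕ) :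
    ((ofSemilength (n + 1)).filter fun p => p ≠ 0 ∧ P p.insidePart ∧ Q p.outsidePart).card =
      ∑ ij ∈ antidiagonal n,
        ((ofSemilength ij.1).filter P).card * ((ofSemilength ij.2).filter Q).card := by
  simp_rw [← card_product]
  rw [← card_sigma]
  symm
  refine card_nbij' (fun x => x.2.1.nest + x.2.2)
    (fun p => ⟨(p.insidePart.semilength, p.outsidePart.semilength), (p.insidePart, p.outsidePart)⟩)
    ?_ ?_ ?_ ?_
  · rintro ⟨⟨i, j⟩, a, q⟩ h
    simp only [coe_sigma, Set.mem_sigma_iff, mem_coe, HasAntidiagonal.mem_antidiagonal,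
      mem_product, mem_filter, mem_ofSemilength] at h
    obtain ⟨rfl, ⟨rfl, hP⟩, rfl, hQ⟩ := h
    simp [hP, hQ, add_right_comm]
  · intro p h
    simp only [mem_coe, mem_filter, mem_ofSemilength] at h
    obtain ⟨hn, hp, hP, hQ⟩ := h
    have := semilength_insidePart_add_semilength_outsidePart_add_one hp
    simp [hP, hQ]
    omega
  · rintro ⟨⟨i, j⟩, a, q⟩ h
    simp only [coe_sigma, Set.mem_sigma_iff, mem_coe, HasAntidiagonal.mem_antidiagonal,
      mem_product, mem_filter, mem_ofSemilength] at h
    obtain ⟨-, ⟨rfl, -⟩, rfl, -⟩ := h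
    simp
  · intro p h
    exact nest_insidePart_add_outsidePart (mem_filter.1 h).2.1

section Series

variable (R : Type*) [Semiring R]

def semilengthSeries (P : DyckWord → Prop) [DecidablePred P] : R⟦X⟧ :=
  PowerSeries.mk fun n => (((ofSemilength n).filter P).card : R)

variable {R}

lemma coeff_semilengthSeries (P : DyckWord → Prop) [DecidablePred P] (n : ℕ) :
    coeff n (semilengthSeries R P) = (((ofSemilength n).filter P).card : R) :=
  coeff_mk _ _

lemma semilengthSeries_congr {P Q : DyckWord → Prop} [DecidablePred P] [DecidablePred Q]
    (h : ∀ p, P p ↔ Q p) : semilengthSeries R P = semilengthSeries R Q := by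
  obtain rfl : P = Q := funext fun p => propext (h p)
  congr

lemma semilengthSeries_eq_zero : semilengthSeries R (· = 0) = 1 := by
  ext n
  rw [coeff_semilengthSeries, filter_eq', coeff_one]
  simp only [mem_ofSemilength, semilength_zero, eq_comm (a := 0)]
  split_ifs <;> simp

lemma semilengthSeries_or {P Q : DyckWord → Prop} [DecidablePred P] [DecidablePred Q]
    (h : ∀ p, P p → ¬ Q p) :
    semilengthSeries R (fun p => P p ∨ Q p) = semilengthSeries R P + semilengthSeries R Q := by
  ext n
  have : (ofSemilength n).filter (fun p => P p ∨ Q p) =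
      (ofSemilength n).filter P ∪ (ofSemilength n).filter Q := by
    ext p
    simp [and_or_left]
  rw [map_add, coeff_semilengthSeries, coeff_semilengthSeries, coeff_semilengthSeries, this,
    card_union_of_disjoint (disjoint_filter.2 fun p _ => h p), Nat.cast_add]

lemma semilengthSeries_nest_add (P Q : DyckWord → Prop) [DecidablePred P] [DecidablePred Q] :
    semilengthSeries R (fun p => p ≠ 0 ∧ P p.insidePart ∧ Q p.outsidePart) =
      X * semilengthSeries R P * semilengthSeries R Q := by
  ext (_ | n)
  · have : (ofSemilength 0).filter (fun p => p ≠ 0 ∧ P p.insidePart ∧ Q p.outsidePart) = ∅ :=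
      filter_eq_empty_iff.2 fun p hp h =>
        h.1 (eq_zero_of_semilength_eq_zero (mem_ofSemilength.1 hp))
    rw [coeff_semilengthSeries, mul_assoc, coeff_zero_X_mul, this, card_empty, Nat.cast_zero]
  · rw [coeff_semilengthSeries, mul_assoc, coeff_succ_X_mul, coeff_mul, card_filter_nest_add]
    push_cast
    simp only [coeff_semilengthSeries]

end Series

section FunctionalEquations

open scoped Classical

variable {R : Type*} [Semiring R]

lemma semilengthSeries_isValleyFree :
    semilengthSeries R IsValleyFree = 1 + X * semilengthSeries R IsValleyFree := by
  conv_lhs => rw [semilengthSeries_congr isValleyFree_iff]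
  rw [semilengthSeries_or fun p h0 h => h.1 h0, semilengthSeries_eq_zero,
    semilengthSeries_nest_add IsValleyFree (· = 0), semilengthSeries_eq_zero, mul_one]

lemma semilengthSeries_isGrounded :
    semilengthSeries R IsGrounded = 1 + (X * semilengthSeries R IsValleyFree +
      X * semilengthSeries R IsGrounded * semilengthSeries R fun q => q ≠ 0 ∧ IsGrounded q) := by
  conv_lhs => rw [semilengthSeries_congr isGrounded_iff]
  rw [semilengthSeries_or fun p h0 h => by rcases h with h | h <;> exact h.1 h0,
    semilengthSeries_or fun p h h' => h'.2.2.1 h.2.2, semilengthSeries_eq_zero,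
    semilengthSeries_nest_add IsValleyFree (· = 0),
    semilengthSeries_nest_add IsGrounded fun q => q ≠ 0 ∧ IsGrounded q, semilengthSeries_eq_zero,
    mul_one]

lemma semilengthSeries_isGrounded_eq_one_add :
    semilengthSeries R IsGrounded = 1 + semilengthSeries R fun q => q ≠ 0 ∧ IsGrounded q := by
  rw [semilengthSeries_congr isGrounded_iff_eq_zero_or, semilengthSeries_or fun p h0 h => h.1 h0,
    semilengthSeries_eq_zero]

end FunctionalEquations

end DyckWord

lemma bCount_eq_card (n : ℕ) :
    open scoped Classical in
    bCount n = ((DyckWord.ofSemilength n).filter DyckWord.IsGrounded).card := by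
  rw [bCount, ← Finset.card_map ⟨DyckWord.toBools, DyckWord.toBools_injective⟩,
    ← Set.ncard_coe_finset]
  congr 1
  ext l
  simp only [Set.mem_ofPred_eq, Finset.coe_map, Finset.coe_filter, Set.mem_image,
    Function.Embedding.coeFn_mk, DyckWord.mem_ofSemilength, DyckWord.isDyck_iff_mem_range_toBools,
    restrictedD_and_noValleyOrLastGround_iff]
  constructor
  · rintro ⟨⟨p, rfl⟩, hn, hp⟩
    exact ⟨p, ⟨(DyckWord.semilength_toBools p).symm.trans hn, hp⟩, rfl⟩
  · rintro ⟨p, ⟨hn, hp⟩, rfl⟩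
    exact ⟨⟨p, rfl⟩, (DyckWord.semilength_toBools p).trans hn, hp⟩

lemma Bgf_eq_semilengthSeries :
    open scoped Classical in Bgf = DyckWord.semilengthSeries ℚ DyckWord.IsGrounded := by
  ext n
  rw [Bgf, coeff_mk, DyckWord.coeff_semilengthSeries, bCount_eq_card]

/-- `Σ_{n≥0} b(n) x^n = (1 - x² - √(1-4x+2x²+x⁴)) / (2x(1-x))`, stated as the
squared (algebraic) identity `(1 - x² - 2x(1-x)B(x))² = 1 - 4x + 2x² + x⁴`
in `ℚ[[x]]`. -/
theorem Bgf_algebraic_equation :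
    ((1 : PowerSeries ℚ) - X ^ 2 - 2 * X * (1 - X) * Bgf) ^ 2 =
      1 - 4 * X + 2 * X ^ 2 + X ^ 4 := by
  classical
  rw [Bgf_eq_semilengthSeries]
  -- the difference of the two sides is `4x(1-x) (x(1-x)B² - (1-x²)B + 1)`
  linear_combination (-4 * X ^ 2 * (1 - X)) * DyckWord.semilengthSeries_isValleyFree (R := ℚ) +
    (-4 * X * (1 - X) ^ 2) * DyckWord.semilengthSeries_isGrounded (R := ℚ) +
    (4 * X ^ 2 * (1 - X) ^ 2 * DyckWord.semilengthSeries ℚ DyckWord.IsGrounded) *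
      DyckWord.semilengthSeries_isGrounded_eq_one_add (R := ℚ)
end
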